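/- arXiv:2211.17261 — 7 statements merged into one kernel-verified Lean document; each statement's English description precedes it below -/
import Mathlib

section
/- Let p be a prime, n ≥ 1, and let C = 𝔽_p[t_1,…,t_n]/(t_1^p,…,t_n^p). The assignments x_i ↦ (multiplication by t_i) and y_j ↦ (the partial derivative ∂/∂t_j, which descends to C) define an 𝔽_p-algebra homomorphism from the reduced Weyl algebra D_n to End_{𝔽_p}(C), and this homomorphism is an isomorphism; in particular D_n is isomorphic to the algebra of p^n × p^n matrices over 𝔽_p. -/
/-!
Statement 2: For a prime `p` and `n ≥ 1`, with `C = 𝔽_p[t_1,…,t_n]/(t_1^p,…,t_n^p)`,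
the assignments `x_i ↦ (multiplication by t_i)` and `y_j ↦ ∂/∂t_j` (descended to `C`)
define an `𝔽_p`-algebra homomorphism from the reduced Weyl algebra `D_n` to `End_{𝔽_p}(C)`
which is an isomorphism; in particular `D_n ≅ Mat_{p^n}(𝔽_p)`.
-/

noncomputable section

open FreeAlgebra

/-- The defining relations of the reduced Weyl algebra `D_n` over `𝔽_p`: the `x_i`
(indexed by `Sum.inl i`) commute, the `y_j` (indexed by `Sum.inr j`) commute,
`y_j x_i = x_i y_j + δ_{ij}`, and `x_i^p = y_j^p = 0`. -/
inductive ReducedWeylRel (p n : ℕ) :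
    FreeAlgebra (ZMod p) (Fin n ⊕ Fin n) → FreeAlgebra (ZMod p) (Fin n ⊕ Fin n) → Prop
  | xx (i j : Fin n) :
      ReducedWeylRel p n (ι (ZMod p) (Sum.inl i) * ι (ZMod p) (Sum.inl j))
        (ι (ZMod p) (Sum.inl j) * ι (ZMod p) (Sum.inl i))
  | yy (i j : Fin n) :
      ReducedWeylRel p n (ι (ZMod p) (Sum.inr i) * ι (ZMod p) (Sum.inr j))
        (ι (ZMod p) (Sum.inr j) * ι (ZMod p) (Sum.inr i))
  | yx (i j : Fin n) :
      ReducedWeylRel p n (ι (ZMod p) (Sum.inr j) * ι (ZMod p) (Sum.inl i))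
        (ι (ZMod p) (Sum.inl i) * ι (ZMod p) (Sum.inr j) + if i = j then 1 else 0)
  | xp (i : Fin n) : ReducedWeylRel p n (ι (ZMod p) (Sum.inl i) ^ p) 0
  | yp (j : Fin n) : ReducedWeylRel p n (ι (ZMod p) (Sum.inr j) ^ p) 0

/-- The reduced Weyl algebra `D_n` over `𝔽_p`. -/
abbrev ReducedWeyl (p n : ℕ) : Type := RingQuot (ReducedWeylRel p n)

/-- The generator `x_i` of the reduced Weyl algebra. -/
def rwX (p n : ℕ) (i : Fin n) : ReducedWeyl p n :=
  RingQuot.mkAlgHom (ZMod p) (ReducedWeylRel p n) (ι (ZMod p) (Sum.inl i))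

/-- The generator `y_j` of the reduced Weyl algebra. -/
def rwY (p n : ℕ) (j : Fin n) : ReducedWeyl p n :=
  RingQuot.mkAlgHom (ZMod p) (ReducedWeylRel p n) (ι (ZMod p) (Sum.inr j))

/-- The ideal `(t_1^p, …, t_n^p)` of `𝔽_p[t_1, …, t_n]`. -/
abbrev cIdeal (p n : ℕ) : Ideal (MvPolynomial (Fin n) (ZMod p)) :=
  Ideal.span (Set.range fun i : Fin n => (MvPolynomial.X i : MvPolynomial (Fin n) (ZMod p)) ^ p)

/-- The truncated polynomial algebra `C = 𝔽_p[t_1,…,t_n]/(t_1^p,…,t_n^p)`. -/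
abbrev Cring (p n : ℕ) : Type := MvPolynomial (Fin n) (ZMod p) ⧸ cIdeal p n

set_option linter.unusedSectionVars false
set_option maxHeartbeats 1000000

section Development
open MvPolynomial Finsupp
variable {p n : ℕ} [Fact p.Prime]


theorem pderiv_comm' (i j : Fin n) (f : MvPolynomial (Fin n) (ZMod p)) :
    pderiv i (pderiv j f) = pderiv j (pderiv i f) := by
  induction f using MvPolynomial.induction_on' with
  | monomial m c =>
    simp only [pderiv_monomial]
    rcases eq_or_ne i j with rfl | hij
    · rfl
    · simp only [Finsupp.tsub_apply, Finsupp.single_eq_of_ne' hij.symm,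
        Finsupp.single_eq_of_ne' hij, tsub_zero, tsub_right_comm]
      ring_nf
  | add f g hf hg => simp [hf, hg]

theorem pderiv_pow_monomial (j : Fin n) (k : ℕ) (m : Fin n →₀ ℕ) (c : ZMod p) :
    ((pderiv j).toLinearMap ^ k) (monomial m c) =
      monomial (m - Finsupp.single j k) (c * (Nat.descFactorial (m j) k : ZMod p)) := by
  induction k generalizing m c with
  | zero => simp
  | succ k ih =>
    rw [pow_succ', Module.End.mul_apply, ih]
    rw [show ((pderiv j).toLinearMap : MvPolynomial (Fin n) (ZMod p) →ₗ[ZMod p] _) ((monomial (m - Finsupp.single j k)) (c * ((m j).descFactorial k : ZMod p))) = pderiv j ((monomial (m - Finsupp.single j k)) (c * ((m j).descFactorial k : ZMod p))) from rfl, pderiv_monomial]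
    have hm : m - Finsupp.single j k - Finsupp.single j 1 = m - Finsupp.single j (k+1) := by
      rw [tsub_tsub, ← Finsupp.single_add]
    rw [hm, Finsupp.tsub_apply, Finsupp.single_eq_same, Nat.descFactorial_succ]
    push_cast
    ring

theorem pderiv_pow_p (j : Fin n) (f : MvPolynomial (Fin n) (ZMod p)) :
    ((pderiv j).toLinearMap ^ p) f = 0 := by
  induction f using MvPolynomial.induction_on' with
  | monomial m c =>
    rw [pderiv_pow_monomial]
    have : (p : ℕ) ∣ Nat.descFactorial (m j) p :=
      dvd_trans (Nat.dvd_factorial (Fact.out (p := p.Prime)).pos le_rfl)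
        (Nat.factorial_dvd_descFactorial _ _)
    rw [(ZMod.natCast_eq_zero_iff _ _).2 this, mul_zero, map_zero]
  | add f g hf hg => simp [map_add, hf, hg]


theorem X_pow_mem (i : Fin n) : (X i : MvPolynomial (Fin n) (ZMod p)) ^ p ∈ cIdeal p n :=
  Ideal.subset_span ⟨i, rfl⟩

theorem monomial_mem_of_ge {m : Fin n →₀ ℕ} {i : Fin n} (h : p ≤ m i) (c : ZMod p) :
    monomial m c ∈ cIdeal p n := by
  have hm : (m - Finsupp.single i p) + Finsupp.single i p = m := by
    ext k
    rcases eq_or_ne k i with rfl | hk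
    · simp [Nat.sub_add_cancel h]
    · simp [Finsupp.single_eq_of_ne' (Ne.symm hk)]
  have : monomial m c = monomial (m - Finsupp.single i p) c * (X i) ^ p := by
    rw [X_pow_eq_monomial, monomial_mul, mul_one, hm]
  rw [this]
  exact Ideal.mul_mem_left _ _ (X_pow_mem i)

theorem pderiv_mem {f : MvPolynomial (Fin n) (ZMod p)} (hf : f ∈ cIdeal p n) (j : Fin n) :
    pderiv j f ∈ cIdeal p n := by
  have key : f ∈ cIdeal p n ∧ pderiv j f ∈ cIdeal p n := by
    refine Submodule.span_induction ?_ ?_ ?_ ?_ hf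
    · rintro _ ⟨i, rfl⟩
      refine ⟨X_pow_mem i, ?_⟩
      dsimp only
      rw [X_pow_eq_monomial, pderiv_monomial]
      rcases eq_or_ne j i with rfl | hj
      · rw [Finsupp.single_eq_same, one_mul,
          show ((p : ℕ) : ZMod p) = 0 by simp, map_zero]
        exact zero_mem _
      · rw [Finsupp.single_eq_of_ne' (Ne.symm hj), Nat.cast_zero, mul_zero, map_zero]
        exact zero_mem _
    · exact ⟨zero_mem _, by simp [zero_mem]⟩
    · intro a b _ _ ha hb
      exact ⟨add_mem ha.1 hb.1, by rw [map_add]; exact add_mem ha.2 hb.2⟩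
    · intro r g _ hg
      refine ⟨Ideal.mul_mem_left _ _ hg.1, ?_⟩
      rw [smul_eq_mul, pderiv_mul]
      exact add_mem (Ideal.mul_mem_left _ _ hg.1) (Ideal.mul_mem_left _ _ hg.2)
  exact key.2

theorem coeff_eq_zero_of_mem {f : MvPolynomial (Fin n) (ZMod p)} (hf : f ∈ cIdeal p n)
    {m : Fin n →₀ ℕ} (hm : ∀ i, m i < p) : coeff m f = 0 := by
  have key : ∀ m : Fin n →₀ ℕ, (∀ i, m i < p) → coeff m f = 0 := by
    refine Submodule.span_induction ?_ ?_ ?_ ?_ hf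
    · rintro _ ⟨i, rfl⟩ m hm
      dsimp only
      rw [X_pow_eq_monomial, coeff_monomial, if_neg]
      rintro rfl
      exact absurd (hm i) (by simp)
    · simp
    · intro a b _ _ ha hb m hm
      simp [coeff_add, ha m hm, hb m hm]
    · intro r g _ hg m hm
      rw [smul_eq_mul, coeff_mul]
      refine Finset.sum_eq_zero fun x hx => ?_
      rw [Finset.HasAntidiagonal.mem_antidiagonal] at hx
      rw [hg x.2 (fun i => lt_of_le_of_lt ?_ (hm i)), mul_zero]
      rw [← hx]
      simp
  exact key m hm

section ops
variable (p n : ℕ) [Fact p.Prime]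

def mkC : MvPolynomial (Fin n) (ZMod p) →ₐ[ZMod p] Cring p n :=
  Ideal.Quotient.mkₐ (ZMod p) (cIdeal p n)

def Uop (i : Fin n) : Module.End (ZMod p) (Cring p n) :=
  LinearMap.mulLeft (ZMod p) (mkC p n (X i))

def Dop (j : Fin n) : Module.End (ZMod p) (Cring p n) :=
  Submodule.liftQ ((cIdeal p n).restrictScalars (ZMod p))
    ((mkC p n).toLinearMap ∘ₗ (pderiv j).toLinearMap)
    (fun f hf => by
      show mkC p n (pderiv j f) = 0
      rw [mkC, Ideal.Quotient.mkₐ_eq_mk, Ideal.Quotient.eq_zero_iff_mem]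
      exact pderiv_mem hf j)

def mvec (m : Fin n →₀ ℕ) : Cring p n := mkC p n (monomial m 1)

end ops

theorem mkC_surjective : Function.Surjective (mkC p n) :=
  Ideal.Quotient.mkₐ_surjective (ZMod p) (cIdeal p n)

@[simp] theorem Dop_mk (j : Fin n) (q : MvPolynomial (Fin n) (ZMod p)) :
    Dop p n j (mkC p n q) = mkC p n (pderiv j q) := rfl

@[simp] theorem Uop_mk (i : Fin n) (q : MvPolynomial (Fin n) (ZMod p)) :
    Uop p n i (mkC p n q) = mkC p n (X i * q) := by
  simp [Uop, LinearMap.mulLeft_apply, ← map_mul]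

theorem mkC_eq_zero {f : MvPolynomial (Fin n) (ZMod p)} (hf : f ∈ cIdeal p n) :
    mkC p n f = 0 := by
  rw [mkC, Ideal.Quotient.mkₐ_eq_mk, Ideal.Quotient.eq_zero_iff_mem]
  exact hf

theorem mvec_eq_zero {m : Fin n →₀ ℕ} {i : Fin n} (h : p ≤ m i) : mvec p n m = 0 :=
  mkC_eq_zero (monomial_mem_of_ge h 1)

theorem Dop_pow_mk (j : Fin n) (k : ℕ) (q : MvPolynomial (Fin n) (ZMod p)) :
    (Dop p n j ^ k) (mkC p n q) = mkC p n (((pderiv j).toLinearMap ^ k) q) := by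
  induction k generalizing q with
  | zero => simp
  | succ k ih => rw [pow_succ', pow_succ', Module.End.mul_apply, Module.End.mul_apply, ih, Dop_mk]; rfl

theorem Uop_mvec (i : Fin n) (m : Fin n →₀ ℕ) :
    Uop p n i (mvec p n m) = mvec p n (m + Finsupp.single i 1) := by
  rw [mvec, Uop_mk, X, monomial_mul, mul_one, add_comm, mvec]

theorem Uop_pow_mvec (i : Fin n) (k : ℕ) (m : Fin n →₀ ℕ) :
    (Uop p n i ^ k) (mvec p n m) = mvec p n (m + Finsupp.single i k) := by
  induction k generalizing m with
  | zero => simp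
  | succ k ih =>
    rw [pow_succ', Module.End.mul_apply, ih, Uop_mvec, add_assoc, ← Finsupp.single_add]

theorem Dop_pow_mvec (j : Fin n) (k : ℕ) (m : Fin n →₀ ℕ) :
    (Dop p n j ^ k) (mvec p n m) =
      (Nat.descFactorial (m j) k : ZMod p) • mvec p n (m - Finsupp.single j k) := by
  rw [mvec, Dop_pow_mk, pderiv_pow_monomial, one_mul]
  rw [show (monomial (m - Finsupp.single j k)) ((Nat.descFactorial (m j) k : ZMod p))
      = (Nat.descFactorial (m j) k : ZMod p) • (monomial (m - Finsupp.single j k)) (1 : ZMod p) by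
      rw [← map_smul, smul_eq_mul, mul_one], map_smul]
  rfl

section basis
variable (p n : ℕ) [Fact p.Prime]

def fa (a : Fin n → Fin p) : Fin n →₀ ℕ :=
  Finsupp.equivFunOnFinite.symm (fun i => (a i : ℕ))

@[simp] theorem fa_apply (a : Fin n → Fin p) (i : Fin n) : fa p n a i = (a i : ℕ) := rfl

theorem fa_injective : Function.Injective (fa p n) := by
  intro a b h
  funext i
  exact Fin.val_injective (by simpa using congrArg (fun m => m i) h)

theorem fa_lt (a : Fin n → Fin p) (i : Fin n) : fa p n a i < p := (a i).isLt

def bvec (a : Fin n → Fin p) : Cring p n := mvec p n (fa p n a)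

def phi : Cring p n →ₗ[ZMod p] ((Fin n → Fin p) → ZMod p) :=
  Submodule.liftQ ((cIdeal p n).restrictScalars (ZMod p))
    (LinearMap.pi (fun a => lcoeff (ZMod p) (fa p n a)))
    (fun f hf => by
      show (fun a => coeff (fa p n a) f) = 0
      funext a
      exact coeff_eq_zero_of_mem hf (fa_lt p n a))

def psi : ((Fin n → Fin p) → ZMod p) →ₗ[ZMod p] Cring p n where
  toFun g := ∑ a, g a • bvec p n a
  map_add' g h := by simp [add_smul, Finset.sum_add_distrib]
  map_smul' c g := by simp [Finset.smul_sum, smul_smul]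

end basis

variable (p n : ℕ) [Fact p.Prime]

@[simp] theorem phi_mk (q : MvPolynomial (Fin n) (ZMod p)) :
    phi p n (mkC p n q) = fun a => coeff (fa p n a) q := rfl

theorem psi_apply (g : (Fin n → Fin p) → ZMod p) :
    psi p n g = ∑ a, g a • bvec p n a := rfl

theorem psi_single (a : Fin n → Fin p) (c : ZMod p) :
    psi p n (Pi.single a c) = c • bvec p n a := by
  rw [psi_apply]
  rw [Finset.sum_eq_single a (fun b _ hb => by rw [Pi.single_eq_of_ne hb, zero_smul])
    (fun h => absurd (Finset.mem_univ a) h)]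
  rw [Pi.single_eq_same]

theorem phi_bvec (a : Fin n → Fin p) : phi p n (bvec p n a) = Pi.single a 1 := by
  rw [bvec, mvec, phi_mk]
  funext b
  rw [coeff_monomial, Pi.single_apply]
  by_cases h : b = a
  · subst h; simp
  · rw [if_neg (fun hh => h (fa_injective p n hh).symm), if_neg h]

theorem phi_psi (g : (Fin n → Fin p) → ZMod p) : phi p n (psi p n g) = g := by
  rw [psi_apply, map_sum]
  funext b
  simp only [map_smul, phi_bvec, Finset.sum_apply, Pi.smul_apply, Pi.single_apply,
    smul_eq_mul, mul_ite, mul_one, mul_zero]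
  simp

theorem psi_surjective : Function.Surjective (psi p n) := by
  intro z
  obtain ⟨q, rfl⟩ := mkC_surjective (p := p) (n := n) z
  suffices h : mkC p n q ∈ LinearMap.range (psi p n) by
    obtain ⟨g, hg⟩ := h
    exact ⟨g, hg⟩
  induction q using MvPolynomial.induction_on' with
  | monomial m c =>
    by_cases h : ∀ i, m i < p
    · have hm : fa p n (fun i => ⟨m i, h i⟩) = m := by
        ext i; simp
      have hmc : (monomial m) c = c • (monomial m) (1 : ZMod p) := by
        rw [← map_smul, smul_eq_mul, mul_one]
      have : mkC p n (monomial m c) = c • bvec p n (fun i => ⟨m i, h i⟩) := by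
        rw [bvec, mvec, hm, hmc, map_smul]
      rw [this]
      exact ⟨Pi.single _ c, psi_single p n _ c⟩
    · push_neg at h
      obtain ⟨i, hi⟩ := h
      rw [mkC_eq_zero (monomial_mem_of_ge hi c)]
      exact zero_mem _
  | add f g hf hg =>
    rw [map_add]
    exact add_mem hf hg

def eqC : ((Fin n → Fin p) → ZMod p) ≃ₗ[ZMod p] Cring p n :=
  LinearEquiv.ofBijective (psi p n)
    ⟨fun g h e => by
      have := congrArg (phi p n) e
      rwa [phi_psi, phi_psi] at this, psi_surjective p n⟩

def basisC : Module.Basis (Fin n → Fin p) (ZMod p) (Cring p n) :=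
  Module.Basis.ofEquivFun (eqC p n).symm

theorem basisC_eq (a : Fin n → Fin p) : basisC p n a = bvec p n a := by
  rw [show basisC p n a = (eqC p n).symm.symm (Function.update 0 a 1) from
    congrFun (Module.Basis.coe_ofEquivFun _) a]
  rw [LinearEquiv.symm_symm]
  have : (Function.update (0 : (Fin n → Fin p) → ZMod p) a 1) = Pi.single a 1 := rfl
  rw [this, show (eqC p n) (Pi.single a 1) = psi p n (Pi.single a 1) from rfl, psi_single, one_smul]

theorem finrank_Cring : Module.finrank (ZMod p) (Cring p n) = p ^ n := by
  rw [Module.finrank_eq_card_basis (basisC p n), Fintype.card_fun]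
  simp

-- commutation lemmas for operators
theorem Uop_comm (i k : Fin n) : Uop p n i * Uop p n k = Uop p n k * Uop p n i := by
  refine LinearMap.ext fun z => ?_
  simp [Uop, Module.End.mul_apply, LinearMap.mulLeft_apply, mul_left_comm]

theorem Dop_comm (j k : Fin n) : Dop p n j * Dop p n k = Dop p n k * Dop p n j := by
  refine LinearMap.ext fun z => ?_
  obtain ⟨q, rfl⟩ := mkC_surjective (p := p) (n := n) z
  simp only [Module.End.mul_apply, Dop_mk]
  rw [pderiv_comm']

theorem pderiv_X_ite (j i : Fin n) :
    pderiv j (X i : MvPolynomial (Fin n) (ZMod p)) = if i = j then 1 else 0 := by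
  rcases eq_or_ne i j with rfl | h
  · simp
  · simp [pderiv_X_of_ne h, h]

theorem DU_rel (j i : Fin n) :
    Dop p n j * Uop p n i = Uop p n i * Dop p n j +
      (if i = j then (1 : Module.End (ZMod p) (Cring p n)) else 0) := by
  refine LinearMap.ext fun z => ?_
  obtain ⟨q, rfl⟩ := mkC_surjective (p := p) (n := n) z
  simp only [Module.End.mul_apply, LinearMap.add_apply, Uop_mk, Dop_mk]
  rw [pderiv_mul, pderiv_X_ite]
  split_ifs with h
  · simp only [one_mul, map_add]
    rw [add_comm]
    simp
  · simp [map_add]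

theorem Uop_pow_p (i : Fin n) : Uop p n i ^ p = 0 := by
  rw [Uop, LinearMap.pow_mulLeft, ← map_pow, mkC_eq_zero (X_pow_mem i)]
  exact LinearMap.mulLeft_zero_eq_zero _ _

theorem Dop_pow_p' (j : Fin n) : Dop p n j ^ p = 0 := by
  refine LinearMap.ext fun z => ?_
  obtain ⟨q, rfl⟩ := mkC_surjective (p := p) (n := n) z
  rw [Dop_pow_mk, pderiv_pow_p, map_zero, LinearMap.zero_apply]

def Fmap : ReducedWeyl p n →ₐ[ZMod p] Module.End (ZMod p) (Cring p n) :=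
  RingQuot.liftAlgHom (ZMod p)
    ⟨FreeAlgebra.lift (ZMod p) (Sum.elim (Uop p n) (Dop p n)), by
      rintro x y (⟨i, j⟩ | ⟨i, j⟩ | ⟨i, j⟩ | i | j) <;>
        simp only [map_mul, map_add, map_pow, FreeAlgebra.lift_ι_apply, Sum.elim_inl,
          Sum.elim_inr, map_zero, map_one, apply_ite]
      · exact Uop_comm p n i j
      · exact Dop_comm p n i j
      · have h2 := DU_rel p n j i
        split_ifs with h
        · rwa [if_pos h] at h2
        · rwa [if_neg h] at h2
      · exact Uop_pow_p p n i
      · exact Dop_pow_p' p n j⟩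

theorem Fmap_rwX (i : Fin n) : Fmap p n (rwX p n i) = Uop p n i := by
  rw [rwX, Fmap, RingQuot.liftAlgHom_mkAlgHom_apply, FreeAlgebra.lift_ι_apply, Sum.elim_inl]

theorem Fmap_rwY (j : Fin n) : Fmap p n (rwY p n j) = Dop p n j := by
  rw [rwY, Fmap, RingQuot.liftAlgHom_mkAlgHom_apply, FreeAlgebra.lift_ι_apply, Sum.elim_inr]

-- cross commutation
theorem UD_comm {i j : Fin n} (h : i ≠ j) :
    Commute (Uop p n i) (Dop p n j) := by
  have h2 := DU_rel p n j i
  rw [if_neg h, add_zero] at h2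
  exact h2.symm

theorem UU_comm (i k : Fin n) : Commute (Uop p n i) (Uop p n k) := Uop_comm p n i k
theorem DD_comm (j k : Fin n) : Commute (Dop p n j) (Dop p n k) := Dop_comm p n j k

def blk (a c : Fin n → Fin p) (j : Fin n) : Module.End (ZMod p) (Cring p n) :=
  Uop p n j ^ (a j : ℕ) * (Dop p n j ^ (p - 1) * (Uop p n j ^ (p - 1) * Dop p n j ^ (c j : ℕ)))

theorem blk_comm (a c : Fin n → Fin p) {j k : Fin n} (h : j ≠ k) :
    Commute (blk p n a c j) (blk p n a c k) := by
  have huu := (UU_comm p n j k).pow_pow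
  have hdd := (DD_comm p n j k).pow_pow
  have hud : ∀ e f : ℕ, Commute (Uop p n j ^ e) (Dop p n k ^ f) :=
    fun e f => (UD_comm p n h).pow_pow e f
  have hdu : ∀ e f : ℕ, Commute (Dop p n j ^ e) (Uop p n k ^ f) :=
    fun e f => ((UD_comm p n (Ne.symm h)).symm).pow_pow e f
  unfold blk
  exact (((huu _ _).mul_right ((hud _ _).mul_right ((huu _ _).mul_right (hud _ _)))).mul_left
    (((hdu _ _).mul_right ((hdd _ _).mul_right ((hdu _ _).mul_right (hdd _ _)))).mul_left
      (((huu _ _).mul_right ((hud _ _).mul_right ((huu _ _).mul_right (hud _ _)))).mul_left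
        ((hdu _ _).mul_right ((hdd _ _).mul_right ((hdu _ _).mul_right (hdd _ _)))))))

def mupd (a : Fin n → Fin p) (s : Finset (Fin n)) (m : Fin n →₀ ℕ) : Fin n →₀ ℕ :=
  Finsupp.equivFunOnFinite.symm (fun j => if j ∈ s then (a j : ℕ) else m j)

@[simp] theorem mupd_apply (a : Fin n → Fin p) (s : Finset (Fin n)) (m : Fin n →₀ ℕ)
    (k : Fin n) : mupd p n a s m k = if k ∈ s then (a k : ℕ) else m k := rfl

theorem p_dvd_descFactorial {N k : ℕ} (hk : k ≤ N) (hN : p ≤ N) (h2 : N - k < p) :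
    p ∣ N.descFactorial k := by
  have pp := (Fact.out (p := p.Prime))
  have h3 := Nat.factorial_mul_descFactorial hk
  have hpN : p ∣ N.factorial := Nat.dvd_factorial pp.pos hN
  rw [← h3] at hpN
  rcases (Nat.Prime.dvd_mul pp).1 hpN with hd | hd
  · exact absurd ((Nat.Prime.dvd_factorial pp).1 hd) (by omega)
  · exact hd

theorem blk_mvec (a c : Fin n → Fin p) (j : Fin n) (m : Fin n →₀ ℕ) :
    blk p n a c j (mvec p n m) =
      if m j = (c j : ℕ) then
        ((((c j : ℕ).factorial * (p - 1).factorial : ℕ)) : ZMod p) •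
          mvec p n (mupd p n a {j} m)
      else 0 := by
  have hp2 : 2 ≤ p := (Fact.out (p := p.Prime)).two_le
  simp only [blk, Module.End.mul_apply, Dop_pow_mvec, map_smul, Uop_pow_mvec]
  rcases Nat.lt_trichotomy (m j) (c j : ℕ) with hlt | heq | hgt
  · rw [if_neg (by omega), Nat.descFactorial_eq_zero_iff_lt.2 hlt]
    simp
  · rw [if_pos heq]
    have e1 : (m - Finsupp.single j (c j : ℕ) + Finsupp.single j (p - 1)) j = p - 1 := by
      simp [heq]
    rw [e1, Nat.descFactorial_self, heq, Nat.descFactorial_self]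
    have e2 : m - Finsupp.single j (c j : ℕ) + Finsupp.single j (p - 1) -
        Finsupp.single j (p - 1) + Finsupp.single j (a j : ℕ) = mupd p n a {j} m := by
      ext k
      simp only [Finsupp.add_apply, Finsupp.tsub_apply, mupd_apply, Finset.mem_singleton]
      rcases eq_or_ne k j with rfl | hk
      · simp [heq]
      · simp [Finsupp.single_eq_of_ne' (Ne.symm hk), hk]
    rw [e2, smul_smul, ← Nat.cast_mul]
  · rw [if_neg (by omega)]
    by_cases hv : p ≤ (m j - (c j : ℕ)) + (a j : ℕ)
    · have : mvec p n (m - Finsupp.single j (c j : ℕ) + Finsupp.single j (p - 1) -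
          Finsupp.single j (p - 1) + Finsupp.single j (a j : ℕ)) = 0 := by
        refine mvec_eq_zero (i := j) ?_
        simp only [Finsupp.add_apply, Finsupp.tsub_apply, Finsupp.single_eq_same]
        omega
      rw [this]
      simp
    · have e1 : (m - Finsupp.single j (c j : ℕ) + Finsupp.single j (p - 1)) j
          = m j - (c j : ℕ) + (p - 1) := by simp
      rw [e1]
      have e0 : (((m j - (c j : ℕ) + (p - 1)).descFactorial (p - 1) : ℕ) : ZMod p) = 0 := by
        rw [ZMod.natCast_eq_zero_iff]
        exact p_dvd_descFactorial p (N := m j - (c j : ℕ) + (p - 1)) (k := p - 1) (by omega) (by omega) (by omega)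
      rw [e0]
      simp

def TopS (a c : Fin n → Fin p) (s : Finset (Fin n)) : Module.End (ZMod p) (Cring p n) :=
  s.noncommProd (blk p n a c)
    (show (s : Set (Fin n)).Pairwise (Function.onFun Commute (blk p n a c)) from
      fun _ _ _ _ hxy => blk_comm p n a c hxy)

theorem TopS_cons (a c : Fin n → Fin p) (j : Fin n) (s : Finset (Fin n)) (h : j ∉ s) :
    TopS p n a c (Finset.cons j s h) = blk p n a c j * TopS p n a c s :=
  Finset.noncommProd_cons s j (blk p n a c) h _

open scoped Classical in
theorem TopS_mvec (a c : Fin n → Fin p) (s : Finset (Fin n)) (m : Fin n →₀ ℕ) :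
    TopS p n a c s (mvec p n m) =
      if ∀ j ∈ s, m j = (c j : ℕ) then
        (((∏ j ∈ s, (c j : ℕ).factorial * (p - 1).factorial) : ℕ) : ZMod p) •
          mvec p n (mupd p n a s m)
      else 0 := by
  induction s using Finset.cons_induction with
  | empty =>
    rw [if_pos (by simp)]
    simp only [TopS, Finset.noncommProd_empty, Finset.prod_empty, Nat.cast_one, one_smul,
      Module.End.one_apply]
    congr 1
    ext k
    simp [mupd]
  | cons j0 s hj0 ih =>
    rw [TopS_cons, Module.End.mul_apply, ih]
    by_cases hs : ∀ j ∈ s, m j = (c j : ℕ)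
    · rw [if_pos hs, map_smul, blk_mvec]
      have hm0 : mupd p n a s m j0 = m j0 := by simp [hj0]
      rw [hm0]
      by_cases hj : m j0 = (c j0 : ℕ)
      · rw [if_pos hj, if_pos (by
          intro j hjmem
          rcases Finset.mem_cons.1 hjmem with rfl | hjs
          · exact hj
          · exact hs j hjs)]
        rw [smul_smul, ← Nat.cast_mul, Finset.prod_cons, mul_comm]
        congr 2
        ext k
        simp only [mupd_apply, Finset.mem_singleton, Finset.cons_eq_insert, Finset.mem_insert]
        rcases eq_or_ne k j0 with rfl | hk
        · simp
        · simp [hk, hj0]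
      · rw [if_neg hj, smul_zero, if_neg (by
          intro hall
          exact hj (hall j0 (Finset.mem_cons_self j0 s)))]
    · rw [if_neg hs, map_zero, if_neg (by
        intro hall
        exact hs (fun j hj => hall j (Finset.mem_cons_of_mem hj)))]

open scoped Classical in
theorem TopS_bvec (a c b : Fin n → Fin p) :
    TopS p n a c Finset.univ (bvec p n b) =
      if b = c then
        (((∏ j, (c j : ℕ).factorial * (p - 1).factorial) : ℕ) : ZMod p) • bvec p n a
      else 0 := by
  rw [bvec, TopS_mvec]
  by_cases h : b = c
  · subst h
    rw [if_pos (by simp), if_pos rfl, bvec]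
    congr 2
    ext k
    simp [mupd]
  · rw [if_neg (by
      intro hall
      exact h (funext fun j => Fin.val_injective (hall j (Finset.mem_univ j)))), if_neg h]

theorem lambda_ne_zero (c : Fin n → Fin p) :
    (((∏ j, (c j : ℕ).factorial * (p - 1).factorial) : ℕ) : ZMod p) ≠ 0 := by
  have pp := (Fact.out (p := p.Prime))
  rw [Ne, ZMod.natCast_eq_zero_iff]
  intro hd
  rcases (Nat.Prime.prime pp).dvd_finset_prod_iff _ |>.1 hd with ⟨j, _, hj⟩
  rcases (Nat.Prime.dvd_mul pp).1 hj with h1 | h1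
  · exact absurd ((Nat.Prime.dvd_factorial pp).1 h1) (by have := (c j).isLt; omega)
  · exact absurd ((Nat.Prime.dvd_factorial pp).1 h1) (by have := pp.two_le; omega)

def Eop (a c : Fin n → Fin p) : Module.End (ZMod p) (Cring p n) :=
  (((∏ j, (c j : ℕ).factorial * (p - 1).factorial) : ℕ) : ZMod p)⁻¹ • TopS p n a c Finset.univ

theorem Eop_bvec (a c b : Fin n → Fin p) :
    Eop p n a c (bvec p n b) = if b = c then bvec p n a else 0 := by
  rw [Eop, LinearMap.smul_apply, TopS_bvec]
  by_cases h : b = c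
  · rw [if_pos h, if_pos h, smul_smul, inv_mul_cancel₀ (lambda_ne_zero p n c), one_smul]
  · rw [if_neg h, if_neg h, smul_zero]

theorem blk_mem (a c : Fin n → Fin p) (j : Fin n) : blk p n a c j ∈ (Fmap p n).range := by
  have hU : Uop p n j ∈ (Fmap p n).range := by
    rw [← Fmap_rwX p n j]; exact AlgHom.mem_range_self _ _
  have hD : Dop p n j ∈ (Fmap p n).range := by
    rw [← Fmap_rwY p n j]; exact AlgHom.mem_range_self _ _
  exact mul_mem (pow_mem hU _) (mul_mem (pow_mem hD _) (mul_mem (pow_mem hU _) (pow_mem hD _)))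

theorem Eop_mem (a c : Fin n → Fin p) : Eop p n a c ∈ (Fmap p n).range := by
  refine Subalgebra.smul_mem _ ?_ _
  exact Submonoid.noncommProd_mem (Fmap p n).range.toSubmonoid _ _ _
    (fun j _ => blk_mem p n a c j)

theorem Fmap_surjective : Function.Surjective (Fmap p n) := by
  intro f
  suffices h : f ∈ (Fmap p n).range by exact h
  have hf : f = ∑ a : Fin n → Fin p, ∑ c : Fin n → Fin p,
      ((basisC p n).repr (f (bvec p n c)) a) • Eop p n a c := by
    refine (basisC p n).ext fun b => ?_
    rw [basisC_eq]
    simp only [LinearMap.sum_apply, LinearMap.smul_apply, Eop_bvec]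
    rw [Finset.sum_comm]
    rw [Finset.sum_eq_single b (fun c _ hc => by
      refine Finset.sum_eq_zero fun a _ => ?_
      rw [if_neg (Ne.symm hc), smul_zero]) (fun h => absurd (Finset.mem_univ b) h)]
    simp only [if_pos rfl]
    conv_lhs => rw [← (basisC p n).sum_repr (f (bvec p n b))]
    refine Finset.sum_congr rfl fun a _ => ?_
    simp [basisC_eq]
  rw [hf]
  exact sum_mem fun a _ => sum_mem fun c _ => Subalgebra.smul_mem _ (Eop_mem p n a c) _

-- relations in the reduced Weyl algebra
theorem rwXX (i k : Fin n) : Commute (rwX p n i) (rwX p n k) := by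
  have h := RingQuot.mkAlgHom_rel (ZMod p) (ReducedWeylRel.xx (p := p) i k)
  rw [map_mul, map_mul] at h
  exact h

theorem rwYY (j k : Fin n) : Commute (rwY p n j) (rwY p n k) := by
  have h := RingQuot.mkAlgHom_rel (ZMod p) (ReducedWeylRel.yy (p := p) j k)
  rw [map_mul, map_mul] at h
  exact h

theorem rwYX (j i : Fin n) :
    rwY p n j * rwX p n i = rwX p n i * rwY p n j +
      (if i = j then (1 : ReducedWeyl p n) else 0) := by
  have h := RingQuot.mkAlgHom_rel (ZMod p) (ReducedWeylRel.yx (p := p) i j)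
  rw [map_mul, map_add, map_mul] at h
  rw [rwX, rwY, h]
  congr 1
  split_ifs <;> simp

theorem rwX_pow_p (i : Fin n) : rwX p n i ^ p = 0 := by
  have h := RingQuot.mkAlgHom_rel (ZMod p) (ReducedWeylRel.xp (p := p) (n := n) i)
  rw [map_pow, map_zero] at h
  exact h

theorem rwY_pow_p (j : Fin n) : rwY p n j ^ p = 0 := by
  have h := RingQuot.mkAlgHom_rel (ZMod p) (ReducedWeylRel.yp (p := p) (n := n) j)
  rw [map_pow, map_zero] at h
  exact h

def xpowS (a : Fin n → ℕ) (s : Finset (Fin n)) : ReducedWeyl p n :=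
  s.noncommProd (fun i => rwX p n i ^ a i)
    (show (s : Set (Fin n)).Pairwise (Function.onFun Commute fun i => rwX p n i ^ a i) from
      fun x _ y _ _ => (rwXX p n x y).pow_pow _ _)

def ypowS (b : Fin n → ℕ) (s : Finset (Fin n)) : ReducedWeyl p n :=
  s.noncommProd (fun j => rwY p n j ^ b j)
    (show (s : Set (Fin n)).Pairwise (Function.onFun Commute fun j => rwY p n j ^ b j) from
      fun x _ y _ _ => (rwYY p n x y).pow_pow _ _)

theorem xpowS_cons (a : Fin n → ℕ) (i : Fin n) (s : Finset (Fin n)) (h : i ∉ s) :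
    xpowS p n a (Finset.cons i s h) = rwX p n i ^ a i * xpowS p n a s :=
  Finset.noncommProd_cons s i _ h _

theorem ypowS_cons (b : Fin n → ℕ) (j : Fin n) (s : Finset (Fin n)) (h : j ∉ s) :
    ypowS p n b (Finset.cons j s h) = rwY p n j ^ b j * ypowS p n b s :=
  Finset.noncommProd_cons s j _ h _

theorem xpowS_congr (a b : Fin n → ℕ) (s : Finset (Fin n)) (h : ∀ i ∈ s, a i = b i) :
    xpowS p n a s = xpowS p n b s :=
  Finset.noncommProd_congr rfl (fun i hi => by rw [h i hi]) _

theorem ypowS_congr (a b : Fin n → ℕ) (s : Finset (Fin n)) (h : ∀ i ∈ s, a i = b i) :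
    ypowS p n a s = ypowS p n b s :=
  Finset.noncommProd_congr rfl (fun i hi => by rw [h i hi]) _

-- y_j commutes past a power of x_i
theorem rwY_mul_rwX_pow (j i : Fin n) (k : ℕ) :
    rwY p n j * rwX p n i ^ k = rwX p n i ^ k * rwY p n j +
      (if i = j then ((k : ZMod p)) else 0) • rwX p n i ^ (k - 1) := by
  induction k with
  | zero => simp
  | succ k ih =>
    rw [pow_succ', ← mul_assoc, rwYX, add_mul, mul_assoc, ih, mul_add]
    rcases eq_or_ne i j with rfl | hij
    · simp only [if_pos rfl]
      rcases Nat.eq_zero_or_pos k with rfl | hk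
      · simp [pow_succ']
      · have hx : rwX p n i * rwX p n i ^ (k - 1) = rwX p n i ^ k := by
          rw [← pow_succ']
          congr 1
          omega
        rw [mul_smul_comm, hx]
        push_cast
        rw [add_smul, one_smul, one_mul, ← mul_assoc]
        abel
    · simp only [if_neg hij, zero_smul, add_zero, mul_zero, one_mul, ← mul_assoc]
      simp [hij]

theorem rwY_mul_xpowS (j : Fin n) (a : Fin n → ℕ) (s : Finset (Fin n)) :
    rwY p n j * xpowS p n a s = xpowS p n a s * rwY p n j +
      (if j ∈ s then ((a j : ZMod p) • xpowS p n (Function.update a j (a j - 1)) s) else 0) := by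
  induction s using Finset.cons_induction with
  | empty => simp [xpowS]
  | cons i0 s hi0 ih =>
    rw [xpowS_cons, ← mul_assoc, rwY_mul_rwX_pow, add_mul, mul_assoc, ih, mul_add,
      ← mul_assoc, ← xpowS_cons p n a i0 s hi0]
    rcases eq_or_ne i0 j with rfl | hij
    · rw [if_pos (Finset.mem_cons_self i0 s), if_neg hi0, if_pos rfl, mul_zero, add_zero]
      congr 1
      rw [smul_mul_assoc, xpowS_cons]
      rw [show Function.update a i0 (a i0 - 1) i0 = a i0 - 1 from Function.update_self _ _ _]
      rw [xpowS_congr p n (Function.update a i0 (a i0 - 1)) a s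
        (fun i hi => Function.update_of_ne (fun hh : i = i0 => hi0 (hh ▸ hi)) _ _)]
    · rw [if_neg hij, zero_smul, zero_mul, add_zero]
      congr 1
      by_cases hjs : j ∈ s
      · rw [if_pos hjs, if_pos (Finset.mem_cons_of_mem hjs), mul_smul_comm, xpowS_cons,
          show Function.update a j (a j - 1) i0 = a i0 from
            Function.update_of_ne hij _ _]
      · rw [if_neg hjs, mul_zero, if_neg (by
          rw [Finset.mem_cons]
          rintro (rfl | h)
          · exact hij rfl
          · exact hjs h)]

theorem rwX_mul_xpowS (i : Fin n) (a : Fin n → ℕ) :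
    rwX p n i * xpowS p n a Finset.univ
      = xpowS p n (Function.update a i (a i + 1)) Finset.univ := by
  unfold xpowS
  rw [← Finset.mul_noncommProd_erase Finset.univ (Finset.mem_univ i)
      (fun k => rwX p n k ^ a k) (fun x _ y _ _ => (rwXX p n x y).pow_pow _ _),
    ← Finset.mul_noncommProd_erase Finset.univ (Finset.mem_univ i)
      (fun k => rwX p n k ^ Function.update a i (a i + 1) k)
        (fun x _ y _ _ => (rwXX p n x y).pow_pow _ _)]
  erw [Finset.noncommProd_congr rfl (fun k hk =>
    (by rw [Function.update_of_ne (Finset.ne_of_mem_erase hk)] :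
      rwX p n k ^ Function.update a i (a i + 1) k = rwX p n k ^ a k)) _]
  rw [Function.update_self, pow_succ', mul_assoc]

theorem rwY_mul_ypowS (j : Fin n) (b : Fin n → ℕ) :
    rwY p n j * ypowS p n b Finset.univ
      = ypowS p n (Function.update b j (b j + 1)) Finset.univ := by
  unfold ypowS
  rw [← Finset.mul_noncommProd_erase Finset.univ (Finset.mem_univ j)
      (fun k => rwY p n k ^ b k) (fun x _ y _ _ => (rwYY p n x y).pow_pow _ _),
    ← Finset.mul_noncommProd_erase Finset.univ (Finset.mem_univ j)
      (fun k => rwY p n k ^ Function.update b j (b j + 1) k)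
        (fun x _ y _ _ => (rwYY p n x y).pow_pow _ _)]
  erw [Finset.noncommProd_congr rfl (fun k hk =>
    (by rw [Function.update_of_ne (Finset.ne_of_mem_erase hk)] :
      rwY p n k ^ Function.update b j (b j + 1) k = rwY p n k ^ b k)) _]
  rw [Function.update_self, pow_succ', mul_assoc]

theorem xpowS_eq_zero {a : Fin n → ℕ} {i : Fin n} (h : p ≤ a i) :
    xpowS p n a Finset.univ = 0 := by
  unfold xpowS
  rw [← Finset.mul_noncommProd_erase Finset.univ (Finset.mem_univ i)
      (fun k => rwX p n k ^ a k) _]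
  rw [show a i = p + (a i - p) by omega, pow_add, rwX_pow_p, zero_mul, zero_mul]

theorem ypowS_eq_zero {b : Fin n → ℕ} {j : Fin n} (h : p ≤ b j) :
    ypowS p n b Finset.univ = 0 := by
  unfold ypowS
  rw [← Finset.mul_noncommProd_erase Finset.univ (Finset.mem_univ j)
      (fun k => rwY p n k ^ b k) _]
  rw [show b j = p + (b j - p) by omega, pow_add, rwY_pow_p, zero_mul, zero_mul]

theorem xpowS_zero : xpowS p n (fun _ => 0) Finset.univ = 1 := by
  unfold xpowS
  rw [Finset.noncommProd_eq_pow_card _ _ _ 1 (fun x _ => pow_zero _), one_pow]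

theorem ypowS_zero : ypowS p n (fun _ => 0) Finset.univ = 1 := by
  unfold ypowS
  rw [Finset.noncommProd_eq_pow_card _ _ _ 1 (fun x _ => pow_zero _), one_pow]

def wMon (a b : Fin n → ℕ) : ReducedWeyl p n :=
  xpowS p n a Finset.univ * ypowS p n b Finset.univ

def Vspan : Submodule (ZMod p) (ReducedWeyl p n) :=
  Submodule.span (ZMod p) (Set.range fun ab : (Fin n → Fin p) × (Fin n → Fin p) =>
    wMon p n (fun i => (ab.1 i : ℕ)) (fun i => (ab.2 i : ℕ)))

theorem wMon_mem (a b : Fin n → ℕ) : wMon p n a b ∈ Vspan p n := by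
  by_cases ha : ∀ i, a i < p ∧ b i < p
  · exact Submodule.subset_span
      ⟨(fun i => ⟨a i, (ha i).1⟩, fun i => ⟨b i, (ha i).2⟩), rfl⟩
  · push_neg at ha
    obtain ⟨i, hi⟩ := ha
    by_cases hai : p ≤ a i
    · rw [wMon, xpowS_eq_zero p n hai, zero_mul]
      exact zero_mem _
    · have hbi : p ≤ b i := by
        have := hi (by omega)
        omega
      rw [wMon, ypowS_eq_zero p n hbi, mul_zero]
      exact zero_mem _

theorem one_mem_V : (1 : ReducedWeyl p n) ∈ Vspan p n := by
  have h := wMon_mem p n (fun _ => 0) (fun _ => 0)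
  rwa [wMon, xpowS_zero, ypowS_zero, one_mul] at h

theorem rwX_mul_wMon (i : Fin n) (a b : Fin n → ℕ) :
    rwX p n i * wMon p n a b = wMon p n (Function.update a i (a i + 1)) b := by
  rw [wMon, ← mul_assoc, rwX_mul_xpowS, wMon]

theorem rwY_mul_wMon (j : Fin n) (a b : Fin n → ℕ) :
    rwY p n j * wMon p n a b = wMon p n a (Function.update b j (b j + 1)) +
      (a j : ZMod p) • wMon p n (Function.update a j (a j - 1)) b := by
  rw [wMon, ← mul_assoc, rwY_mul_xpowS, if_pos (Finset.mem_univ j), add_mul, mul_assoc,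
    rwY_mul_ypowS, smul_mul_assoc, wMon, wMon]

theorem rwX_mul_mem (i : Fin n) (v : ReducedWeyl p n) (hv : v ∈ Vspan p n) :
    rwX p n i * v ∈ Vspan p n := by
  refine Submodule.span_induction ?_ ?_ ?_ ?_ hv
  · rintro _ ⟨⟨a', b'⟩, rfl⟩
    rw [rwX_mul_wMon]
    exact wMon_mem p n _ _
  · rw [mul_zero]; exact zero_mem _
  · intro x y _ _ hx hy
    rw [mul_add]; exact add_mem hx hy
  · intro c x _ hx
    rw [mul_smul_comm]; exact Submodule.smul_mem _ _ hx

theorem rwY_mul_mem (j : Fin n) (v : ReducedWeyl p n) (hv : v ∈ Vspan p n) :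
    rwY p n j * v ∈ Vspan p n := by
  refine Submodule.span_induction ?_ ?_ ?_ ?_ hv
  · rintro _ ⟨⟨a', b'⟩, rfl⟩
    rw [rwY_mul_wMon]
    exact add_mem (wMon_mem p n _ _) (Submodule.smul_mem _ _ (wMon_mem p n _ _))
  · rw [mul_zero]; exact zero_mem _
  · intro x y _ _ hx hy
    rw [mul_add]; exact add_mem hx hy
  · intro c x _ hx
    rw [mul_smul_comm]; exact Submodule.smul_mem _ _ hx

theorem left_mul_mem (r : ReducedWeyl p n) (v : ReducedWeyl p n) (hv : v ∈ Vspan p n) :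
    r * v ∈ Vspan p n := by
  obtain ⟨z, rfl⟩ := RingQuot.mkAlgHom_surjective (ZMod p) (ReducedWeylRel p n) r
  induction z using FreeAlgebra.induction generalizing v with
  | grade0 c =>
    rw [AlgHom.commutes, ← Algebra.smul_def]
    exact Submodule.smul_mem _ _ hv
  | grade1 x =>
    rcases x with i | j
    · exact rwX_mul_mem p n i v hv
    · exact rwY_mul_mem p n j v hv
  | mul z1 z2 ih1 ih2 =>
    rw [map_mul, mul_assoc]
    exact ih1 _ (ih2 _ hv)
  | add z1 z2 ih1 ih2 =>
    rw [map_add, add_mul]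
    exact add_mem (ih1 _ hv) (ih2 _ hv)

theorem Vspan_eq_top : Vspan p n = ⊤ :=
  eq_top_iff.2 fun r _ => by
    simpa using left_mul_mem p n r 1 (one_mem_V p n)

def wFinset : Finset (ReducedWeyl p n) :=
  @Finset.image _ _ (Classical.decEq _)
    (fun ab : (Fin n → Fin p) × (Fin n → Fin p) =>
      wMon p n (fun i => (ab.1 i : ℕ)) (fun i => (ab.2 i : ℕ))) Finset.univ

theorem span_wFinset : Submodule.span (ZMod p) (wFinset p n : Set (ReducedWeyl p n)) = ⊤ := by
  rw [wFinset, @Finset.coe_image _ _ (Classical.decEq _), Finset.coe_univ, Set.image_univ]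
  exact Vspan_eq_top p n

theorem moduleFiniteRW : Module.Finite (ZMod p) (ReducedWeyl p n) :=
  ⟨⟨wFinset p n, span_wFinset p n⟩⟩

theorem finrank_RW_le : Module.finrank (ZMod p) (ReducedWeyl p n) ≤ p ^ n * p ^ n := by
  have h2 := finrank_span_finset_le_card (R := ZMod p) (wFinset p n)
  rw [Set.finrank, span_wFinset, finrank_top] at h2
  refine h2.trans ?_
  refine (@Finset.card_image_le _ _ _ _ (Classical.decEq _)).trans ?_
  rw [Finset.card_univ, Fintype.card_prod, Fintype.card_fun]
  simp

theorem finrank_End : Module.finrank (ZMod p) (Module.End (ZMod p) (Cring p n)) =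
    p ^ n * p ^ n := by
  haveI : Module.Finite (ZMod p) (Cring p n) := Module.Finite.of_basis (basisC p n)
  rw [Module.finrank_linearMap, finrank_Cring]

theorem Fmap_injective : Function.Injective (Fmap p n) := by
  haveI := moduleFiniteRW p n
  haveI : Module.Finite (ZMod p) (Cring p n) := Module.Finite.of_basis (basisC p n)
  have hsurj : LinearMap.range (Fmap p n).toLinearMap = ⊤ :=
    LinearMap.range_eq_top.2 (Fmap_surjective p n)
  have h1 := LinearMap.finrank_range_add_finrank_ker (Fmap p n).toLinearMap
  rw [hsurj, finrank_top, finrank_End] at h1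
  have h2 := finrank_RW_le p n
  have hker : Module.finrank (ZMod p) (LinearMap.ker (Fmap p n).toLinearMap) = 0 := by omega
  have hbot := Submodule.finrank_eq_zero.1 hker
  exact LinearMap.ker_eq_bot.1 hbot

theorem reduced_weyl_algebra_is_matrix_algebra' (hn : 1 ≤ n) :
    ∃ F : ReducedWeyl p n →ₐ[ZMod p] Module.End (ZMod p) (Cring p n),
      (∀ i : Fin n,
          F (rwX p n i) =
            LinearMap.mulLeft (ZMod p)
              (Ideal.Quotient.mkₐ (ZMod p) (cIdeal p n) (MvPolynomial.X i))) ∧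
      (∀ j : Fin n, ∀ q : MvPolynomial (Fin n) (ZMod p),
          F (rwY p n j) (Ideal.Quotient.mkₐ (ZMod p) (cIdeal p n) q) =
            Ideal.Quotient.mkₐ (ZMod p) (cIdeal p n) (MvPolynomial.pderiv j q)) ∧
      Function.Bijective F ∧
      Nonempty (ReducedWeyl p n ≃ₐ[ZMod p] Matrix (Fin (p ^ n)) (Fin (p ^ n)) (ZMod p)) := by
  refine ⟨Fmap p n, fun i => ?_, fun j q => ?_, ⟨Fmap_injective p n, Fmap_surjective p n⟩, ?_⟩
  · rw [Fmap_rwX]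
    rfl
  · rw [Fmap_rwY]
    exact Dop_mk j q
  · have hcard : Fintype.card (Fin n → Fin p) = p ^ n := by
      rw [Fintype.card_fun]
      simp
    let bb := (basisC p n).reindex (Fintype.equivFinOfCardEq hcard)
    exact ⟨(AlgEquiv.ofBijective (Fmap p n)
      ⟨Fmap_injective p n, Fmap_surjective p n⟩).trans (algEquivMatrix bb)⟩

end Development

theorem reduced_weyl_algebra_is_matrix_algebra (p n : ℕ) [Fact p.Prime] (hn : 1 ≤ n) :
    ∃ F : ReducedWeyl p n →ₐ[ZMod p] Module.End (ZMod p) (Cring p n),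
      (∀ i : Fin n,
          F (rwX p n i) =
            LinearMap.mulLeft (ZMod p)
              (Ideal.Quotient.mkₐ (ZMod p) (cIdeal p n) (MvPolynomial.X i))) ∧
      (∀ j : Fin n, ∀ q : MvPolynomial (Fin n) (ZMod p),
          F (rwY p n j) (Ideal.Quotient.mkₐ (ZMod p) (cIdeal p n) q) =
            Ideal.Quotient.mkₐ (ZMod p) (cIdeal p n) (MvPolynomial.pderiv j q)) ∧
      Function.Bijective F ∧
      Nonempty (ReducedWeyl p n ≃ₐ[ZMod p] Matrix (Fin (p ^ n)) (Fin (p ^ n)) (ZMod p)) :=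
  reduced_weyl_algebra_is_matrix_algebra' (p := p) (n := n) hn
end
end

section
/- Let p be an odd prime, n ≥ 1, and let R be a commutative ring with p·R = 0 and h ∈ R a nonzerodivisor. Then the center of the Rees reduced Weyl algebra A(R) is exactly the image of R, i.e. Z(A(R)) = R·1. Consequently the kernel of the conjugation homomorphism Ad : A(R)^× → Aut_{R-alg}(A(R)) is R^×. -/
noncomputable section

/-- The defining relations of the Rees reduced Weyl algebra `A(R)` (with parameter `h ∈ R`):
the `x_i` (indexed by `Sum.inl i`) commute, the `y_j` (indexed by `Sum.inr j`) commute,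
`y_j x_i = x_i y_j + δ_{ij}·h`, and `x_i^p = y_j^p = 0`. -/
inductive ReesWeylRel (p n : ℕ) (R : Type) [CommRing R] (h : R) :
    FreeAlgebra R (Fin n ⊕ Fin n) → FreeAlgebra R (Fin n ⊕ Fin n) → Prop
  | xx (i j : Fin n) :
      ReesWeylRel p n R h (FreeAlgebra.ι R (Sum.inl i) * FreeAlgebra.ι R (Sum.inl j))
        (FreeAlgebra.ι R (Sum.inl j) * FreeAlgebra.ι R (Sum.inl i))
  | yy (i j : Fin n) :
      ReesWeylRel p n R h (FreeAlgebra.ι R (Sum.inr i) * FreeAlgebra.ι R (Sum.inr j))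
        (FreeAlgebra.ι R (Sum.inr j) * FreeAlgebra.ι R (Sum.inr i))
  | yx (i j : Fin n) :
      ReesWeylRel p n R h (FreeAlgebra.ι R (Sum.inr j) * FreeAlgebra.ι R (Sum.inl i))
        (FreeAlgebra.ι R (Sum.inl i) * FreeAlgebra.ι R (Sum.inr j) +
          if i = j then algebraMap R (FreeAlgebra R (Fin n ⊕ Fin n)) h else 0)
  | xp (i : Fin n) : ReesWeylRel p n R h (FreeAlgebra.ι R (Sum.inl i) ^ p) 0
  | yp (j : Fin n) : ReesWeylRel p n R h (FreeAlgebra.ι R (Sum.inr j) ^ p) 0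

/-- The Rees reduced Weyl algebra `A(R)` on `2n` generators with parameter `h ∈ R`. -/
abbrev ReesWeyl (p n : ℕ) (R : Type) [CommRing R] (h : R) : Type :=
  RingQuot (ReesWeylRel p n R h)

/-- The generator `x_i` of the Rees reduced Weyl algebra. -/
def reesX (p n : ℕ) (R : Type) [CommRing R] (h : R) (i : Fin n) : ReesWeyl p n R h :=
  RingQuot.mkAlgHom R (ReesWeylRel p n R h) (FreeAlgebra.ι R (Sum.inl i))

/-- The generator `y_j` of the Rees reduced Weyl algebra. -/
def reesY (p n : ℕ) (R : Type) [CommRing R] (h : R) (j : Fin n) : ReesWeyl p n R h :=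
  RingQuot.mkAlgHom R (ReesWeylRel p n R h) (FreeAlgebra.ι R (Sum.inr j))

open Function MvPolynomial

namespace RWAux

variable {p n : ℕ} {R : Type} [CommRing R] {h : R}

variable (p n R h) in
abbrev xg (i : Fin n) : ReesWeyl p n R h := reesX p n R h i
variable (p n R h) in
abbrev yg (j : Fin n) : ReesWeyl p n R h := reesY p n R h j

lemma rel_xx (i j : Fin n) : xg p n R h i * xg p n R h j = xg p n R h j * xg p n R h i := by
  have := RingQuot.mkAlgHom_rel R (ReesWeylRel.xx (p := p) (h := h) i j)
  simpa [xg, reesX, map_mul] using this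

lemma rel_yy (i j : Fin n) : yg p n R h i * yg p n R h j = yg p n R h j * yg p n R h i := by
  have := RingQuot.mkAlgHom_rel R (ReesWeylRel.yy (p := p) (h := h) i j)
  simpa [yg, reesY, map_mul] using this

lemma rel_yx (i j : Fin n) : yg p n R h j * xg p n R h i =
    xg p n R h i * yg p n R h j + (if i = j then algebraMap R (ReesWeyl p n R h) h else 0) := by
  have := RingQuot.mkAlgHom_rel R (ReesWeylRel.yx (p := p) (h := h) i j)
  simpa [xg, yg, reesX, reesY, map_mul, map_add, apply_ite, map_zero,
    AlgHom.commutes] using this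

lemma rel_xp (i : Fin n) : xg p n R h i ^ p = 0 := by
  have := RingQuot.mkAlgHom_rel R (ReesWeylRel.xp (p := p) (h := h) i)
  simpa [xg, reesX, map_pow] using this

lemma rel_yp (j : Fin n) : yg p n R h j ^ p = 0 := by
  have := RingQuot.mkAlgHom_rel R (ReesWeylRel.yp (p := p) (h := h) j)
  simpa [yg, reesY, map_pow] using this

variable (p n R h) in
def Ex : MvPolynomial (Fin n) R →ₐ[R] ReesWeyl p n R h :=
  letI : CommRing (Algebra.adjoin R (Set.range (xg p n R h))) :=
    Algebra.adjoinCommRingOfComm R (by rintro a ⟨i, rfl⟩ b ⟨j, rfl⟩; exact rel_xx i j)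
  ((Algebra.adjoin R (Set.range (xg p n R h))).val).comp
    (aeval fun i => (⟨xg p n R h i, Algebra.subset_adjoin (Set.mem_range_self i)⟩ :
      Algebra.adjoin R (Set.range (xg p n R h))))

variable (p n R h) in
def Fy : MvPolynomial (Fin n) R →ₐ[R] ReesWeyl p n R h :=
  letI : CommRing (Algebra.adjoin R (Set.range (yg p n R h))) :=
    Algebra.adjoinCommRingOfComm R (by rintro a ⟨i, rfl⟩ b ⟨j, rfl⟩; exact rel_yy i j)
  ((Algebra.adjoin R (Set.range (yg p n R h))).val).comp
    (aeval fun j => (⟨yg p n R h j, Algebra.subset_adjoin (Set.mem_range_self j)⟩ :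
      Algebra.adjoin R (Set.range (yg p n R h))))

@[simp] lemma Ex_X (i : Fin n) : Ex p n R h (X i) = xg p n R h i := by
  simp [Ex]

@[simp] lemma Fy_X (j : Fin n) : Fy p n R h (X j) = yg p n R h j := by
  simp [Fy]

lemma y_mul_Ex (j : Fin n) (f : MvPolynomial (Fin n) R) :
    yg p n R h j * Ex p n R h f =
      Ex p n R h f * yg p n R h j + h • Ex p n R h (pderiv j f) := by
  induction f using MvPolynomial.induction_on with
  | C r => simp [Algebra.commutes]
  | add f g hf hg =>
      simp only [map_add, mul_add, add_mul, hf, hg, smul_add]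
      abel
  | mul_X f i hf =>
      rw [map_mul, Ex_X, ← mul_assoc, hf, add_mul, mul_assoc, rel_yx, smul_mul_assoc,
        pderiv_mul, map_add, map_mul, map_mul, Ex_X]
      by_cases hij : i = j
      · subst hij
        rw [if_pos rfl, pderiv_X_self, map_one, mul_one, mul_add, smul_add,
          ← Algebra.commutes, ← Algebra.smul_def]
        simp only [mul_assoc]
        abel
      · rw [if_neg hij, pderiv_X_of_ne hij]
        simp [mul_assoc]

lemma Fy_mul_x (i : Fin n) (g : MvPolynomial (Fin n) R) :
    Fy p n R h g * xg p n R h i =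
      xg p n R h i * Fy p n R h g + h • Fy p n R h (pderiv i g) := by
  induction g using MvPolynomial.induction_on with
  | C r => simp [Algebra.commutes]
  | add f g hf hg =>
      simp only [map_add, mul_add, add_mul, hf, hg, smul_add]
      abel
  | mul_X f j hf =>
      rw [map_mul, Fy_X, mul_assoc, rel_yx, mul_add, ← mul_assoc, hf, add_mul, mul_assoc,
        smul_mul_assoc, pderiv_mul, map_add, map_mul, map_mul, Fy_X]
      by_cases hij : i = j
      · subst hij
        rw [if_pos rfl, pderiv_X_self, map_one, mul_one, smul_add,
          ← Algebra.commutes, ← Algebra.smul_def]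
        abel
      · rw [if_neg hij, pderiv_X_of_ne (fun e => hij e.symm)]
        simp [mul_assoc]

end RWAux


-- ## Fin helpers
section FinHelp
variable {p : ℕ} [NeZero p]

lemma val_sub_one {t : Fin p} (ht : t ≠ 0) : ((t - 1 : Fin p) : ℕ) = (t : ℕ) - 1 := by
  have htv : (t : ℕ) ≠ 0 := by intro e; apply ht; ext; simp [e]
  have hlt := t.isLt
  rw [Fin.sub_def]
  simp only [Fin.val_one']
  have h1 : 1 % p = 1 := Nat.mod_eq_of_lt (by omega)
  have h2 : p - 1 % p + (t : ℕ) = ((t : ℕ) - 1) + p := by omega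
  rw [h2, Nat.add_mod_right, Nat.mod_eq_of_lt (by omega)]

lemma val_add_one' (t : Fin p) :
    ((t + 1 : Fin p) : ℕ) = if (t : ℕ) + 1 = p then 0 else (t : ℕ) + 1 := by
  have hlt := t.isLt
  rw [Fin.add_def]
  simp only [Fin.val_one']
  by_cases hc : (t : ℕ) + 1 = p
  · rcases eq_or_lt_of_le (Nat.one_le_iff_ne_zero.2 (NeZero.ne p)) with hp1 | hp2
    · have ht0 : (t : ℕ) = 0 := by omega
      simp [← hp1, ht0]
    · have h1 : 1 % p = 1 := Nat.mod_eq_of_lt (by omega)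
      rw [h1, if_pos hc, hc, Nat.mod_self]
  · have hp2 : 2 ≤ p := by omega
    have h1 : 1 % p = 1 := Nat.mod_eq_of_lt (by omega)
    rw [h1, if_neg hc, Nat.mod_eq_of_lt (by omega)]

lemma add_one_eq_zero_iff {t : Fin p} : t + 1 = 0 ↔ (t : ℕ) + 1 = p := by
  rw [Fin.ext_iff, val_add_one', Fin.val_zero]
  split <;> simp_all

lemma val_add_one_of_ne {t : Fin p} (ht : (t : ℕ) + 1 ≠ p) :
    ((t + 1 : Fin p) : ℕ) = (t : ℕ) + 1 := by rw [val_add_one', if_neg ht]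

end FinHelp

namespace RWAux

variable {p n : ℕ} {R : Type} [CommRing R] {h : R} [NeZero p]

variable (p n) in
abbrev Idx := (Fin n → Fin p) × (Fin n → Fin p)

variable (p n R) in
abbrev MM := Idx p n → R

variable (p n R) in
def mkOp (r : Idx p n → R) (g : Idx p n → Idx p n) : MM p n R →ₗ[R] MM p n R where
  toFun v := fun ab => r ab * v (g ab)
  map_add' u v := by funext ab; simp [mul_add]
  map_smul' c v := by funext ab; simp [smul_eq_mul]; ring

variable (p n R) in
def Xop (i : Fin n) : MM p n R →ₗ[R] MM p n R :=
  mkOp p n R (fun ab => if ab.1 i = 0 then 0 else 1)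
       (fun ab => (update ab.1 i (ab.1 i - 1), ab.2))

variable (p n R) in
def S2 (j : Fin n) : MM p n R →ₗ[R] MM p n R :=
  mkOp p n R (fun ab => if ab.2 j = 0 then 0 else 1)
       (fun ab => (ab.1, update ab.2 j (ab.2 j - 1)))

variable (p n R) in
def Nop (j : Fin n) : MM p n R →ₗ[R] MM p n R :=
  mkOp p n R (fun ab => (((ab.1 j : ℕ) + 1 : ℕ) : R))
       (fun ab => (update ab.1 j (ab.1 j + 1), ab.2))

variable (p n R) in
def N2 (i : Fin n) : MM p n R →ₗ[R] MM p n R :=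
  mkOp p n R (fun ab => (((ab.2 i : ℕ) + 1 : ℕ) : R))
       (fun ab => (ab.1, update ab.2 i (ab.2 i + 1)))

variable (p n R) in
def Yop (h : R) (j : Fin n) : MM p n R →ₗ[R] MM p n R := S2 p n R j + h • Nop p n R j

@[simp] lemma Xop_apply (i : Fin n) (v : MM p n R) (ab : Idx p n) :
    Xop p n R i v ab =
      (if ab.1 i = 0 then (0:R) else 1) * v (update ab.1 i (ab.1 i - 1), ab.2) := rfl

@[simp] lemma S2_apply (j : Fin n) (v : MM p n R) (ab : Idx p n) :
    S2 p n R j v ab =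
      (if ab.2 j = 0 then (0:R) else 1) * v (ab.1, update ab.2 j (ab.2 j - 1)) := rfl

@[simp] lemma Nop_apply (j : Fin n) (v : MM p n R) (ab : Idx p n) :
    Nop p n R j v ab =
      (((ab.1 j : ℕ) + 1 : ℕ) : R) * v (update ab.1 j (ab.1 j + 1), ab.2) := rfl

@[simp] lemma N2_apply (i : Fin n) (v : MM p n R) (ab : Idx p n) :
    N2 p n R i v ab =
      (((ab.2 i : ℕ) + 1 : ℕ) : R) * v (ab.1, update ab.2 i (ab.2 i + 1)) := rfl

lemma Xop_comm (i j : Fin n) : Xop p n R i * Xop p n R j = Xop p n R j * Xop p n R i := by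
  rcases eq_or_ne i j with rfl | hij
  · rfl
  · refine LinearMap.ext fun v => funext fun ab => ?_
    obtain ⟨a, b⟩ := ab
    simp only [Module.End.mul_apply, Xop_apply, update_of_ne hij, update_of_ne hij.symm]
    rw [update_comm hij]
    ring

lemma S2_comm (i j : Fin n) : S2 p n R i * S2 p n R j = S2 p n R j * S2 p n R i := by
  rcases eq_or_ne i j with rfl | hij
  · rfl
  · refine LinearMap.ext fun v => funext fun ab => ?_
    obtain ⟨a, b⟩ := ab
    simp only [Module.End.mul_apply, S2_apply, update_of_ne hij, update_of_ne hij.symm]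
    rw [update_comm hij]
    ring

lemma S2_Xop_comm (i j : Fin n) : S2 p n R i * Xop p n R j = Xop p n R j * S2 p n R i := by
  refine LinearMap.ext fun v => funext fun ab => ?_
  obtain ⟨a, b⟩ := ab
  simp only [Module.End.mul_apply, S2_apply, Xop_apply]
  ring

lemma Nop_S2_comm (i j : Fin n) : Nop p n R i * S2 p n R j = S2 p n R j * Nop p n R i := by
  refine LinearMap.ext fun v => funext fun ab => ?_
  obtain ⟨a, b⟩ := ab
  simp only [Module.End.mul_apply, S2_apply, Nop_apply]
  ring

lemma Nop_comm (i j : Fin n) : Nop p n R i * Nop p n R j = Nop p n R j * Nop p n R i := by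
  rcases eq_or_ne i j with rfl | hij
  · rfl
  · refine LinearMap.ext fun v => funext fun ab => ?_
    obtain ⟨a, b⟩ := ab
    simp only [Module.End.mul_apply, Nop_apply, update_of_ne hij, update_of_ne hij.symm]
    rw [update_comm hij]
    ring

lemma Nop_Xop_comm {i j : Fin n} (hij : i ≠ j) :
    Nop p n R j * Xop p n R i = Xop p n R i * Nop p n R j := by
  refine LinearMap.ext fun v => funext fun ab => ?_
  obtain ⟨a, b⟩ := ab
  simp only [Module.End.mul_apply, Nop_apply, Xop_apply, update_of_ne hij, update_of_ne hij.symm]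
  rw [update_comm hij.symm]
  ring

end RWAux


namespace RWAux

variable {p n : ℕ} {R : Type} [CommRing R] {h : R} [NeZero p]

lemma Nop_Xop_self (hpR : (p : R) = 0) (i : Fin n) :
    Nop p n R i * Xop p n R i = Xop p n R i * Nop p n R i + 1 := by
  refine LinearMap.ext fun v => funext fun ab => ?_
  obtain ⟨a, b⟩ := ab
  by_cases hp1 : p = 1
  · haveI : Subsingleton R := subsingleton_of_zero_eq_one (by rw [← hpR, hp1, Nat.cast_one])
    exact Subsingleton.elim _ _
  have hp2 : 2 ≤ p := by have := Nat.one_le_iff_ne_zero.2 (NeZero.ne p); omega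
  simp only [Module.End.mul_apply, LinearMap.add_apply, Pi.add_apply, Module.End.one_apply,
    Nop_apply, Xop_apply, update_self, update_idem, add_sub_cancel_right, sub_add_cancel,
    update_eq_self]
  have hlt := (a i).isLt
  by_cases h0 : a i = 0
  · have h1 : a i + 1 ≠ 0 := by
      rw [Ne, add_one_eq_zero_iff, h0, Fin.val_zero]
      omega
    rw [if_pos h0, if_neg h1, h0, Fin.val_zero]
    push_cast
    ring
  · by_cases htop : (a i : ℕ) + 1 = p
    · rw [if_neg h0, if_pos (add_one_eq_zero_iff.2 htop), val_sub_one h0]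
      have hvnz : (a i : ℕ) ≠ 0 := by intro e; apply h0; ext; simp [e]
      have hc : ((a i : ℕ) - 1 + 1 : ℕ) = (a i : ℕ) := by omega
      rw [hc]
      have : (((a i : ℕ) : ℕ) : R) + 1 = 0 := by
        have : (((a i : ℕ) + 1 : ℕ) : R) = 0 := by rw [htop, hpR]
        push_cast at this ⊢
        exact this
      calc (((a i : ℕ) + 1 : ℕ) : R) * (0 * v (a, b)) = 0 := by ring
        _ = ((((a i : ℕ) : ℕ) : R) + 1) * v (a, b) := by rw [this]; ring
        _ = _ := by push_cast; ring
    · rw [if_neg h0, if_neg (fun e => htop (add_one_eq_zero_iff.1 e)), val_sub_one h0]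
      have hvnz : (a i : ℕ) ≠ 0 := by intro e; apply h0; ext; simp [e]
      have hc : ((a i : ℕ) - 1 + 1 : ℕ) = (a i : ℕ) := by omega
      rw [hc]
      push_cast
      ring

lemma Xop_pow_eq_zero_of_lt (i : Fin n) (k : ℕ) :
    ∀ (v : MM p n R) (ab : Idx p n), (ab.1 i : ℕ) < k → (Xop p n R i ^ k) v ab = 0 := by
  induction k with
  | zero => intro v ab hab; omega
  | succ k ih =>
      intro v ab hab
      obtain ⟨a, b⟩ := ab
      rw [pow_succ']
      simp only [Module.End.mul_apply, Xop_apply]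
      by_cases h0 : a i = 0
      · rw [if_pos h0, zero_mul]
      · rw [if_neg h0, one_mul]
        refine ih _ _ ?_
        simp only [update_self]
        rw [val_sub_one h0]
        have : (a i : ℕ) ≠ 0 := by intro e; apply h0; ext; simp [e]
        simp only at hab
        omega

lemma Xop_pow_p (i : Fin n) : Xop p n R i ^ p = 0 := by
  refine LinearMap.ext fun v => funext fun ab => ?_
  exact Xop_pow_eq_zero_of_lt i p v ab (ab.1 i).isLt

lemma S2_pow_eq_zero_of_lt (j : Fin n) (k : ℕ) :
    ∀ (v : MM p n R) (ab : Idx p n), (ab.2 j : ℕ) < k → (S2 p n R j ^ k) v ab = 0 := by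
  induction k with
  | zero => intro v ab hab; omega
  | succ k ih =>
      intro v ab hab
      obtain ⟨a, b⟩ := ab
      rw [pow_succ']
      simp only [Module.End.mul_apply, S2_apply]
      by_cases h0 : b j = 0
      · rw [if_pos h0, zero_mul]
      · rw [if_neg h0, one_mul]
        refine ih _ _ ?_
        simp only [update_self]
        rw [val_sub_one h0]
        have : (b j : ℕ) ≠ 0 := by intro e; apply h0; ext; simp [e]
        simp only at hab
        omega

lemma S2_pow_p (j : Fin n) : S2 p n R j ^ p = 0 := by
  refine LinearMap.ext fun v => funext fun ab => ?_
  exact S2_pow_eq_zero_of_lt j p v ab (ab.2 j).isLt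

lemma Nop_pow_eq_zero (hpR : (p : R) = 0) (j : Fin n) (k : ℕ) :
    ∀ (v : MM p n R) (ab : Idx p n), p ≤ (ab.1 j : ℕ) + k → (Nop p n R j ^ k) v ab = 0 := by
  induction k with
  | zero => intro v ab hab; have := (ab.1 j).isLt; omega
  | succ k ih =>
      intro v ab hab
      obtain ⟨a, b⟩ := ab
      rw [pow_succ']
      simp only [Module.End.mul_apply, Nop_apply]
      by_cases htop : (a j : ℕ) + 1 = p
      · have : (((a j : ℕ) + 1 : ℕ) : R) = 0 := by rw [htop, hpR]
        rw [this, zero_mul]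
      · have hb : p ≤ ((update a j (a j + 1)) j : ℕ) + k := by
          rw [update_self, val_add_one_of_ne htop]
          simp only at hab
          omega
        rw [ih v (update a j (a j + 1), b) hb, mul_zero]

lemma Nop_pow_p (hpR : (p : R) = 0) (j : Fin n) : Nop p n R j ^ p = 0 := by
  refine LinearMap.ext fun v => funext fun ab => ?_
  exact Nop_pow_eq_zero hpR j p v ab (by omega)

end RWAux


namespace RWAux

variable {p n : ℕ} {R : Type} [CommRing R] {h : R} [NeZero p]

lemma Yop_Yop_comm (i j : Fin n) :
    Yop p n R h i * Yop p n R h j = Yop p n R h j * Yop p n R h i := by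
  simp only [Yop, mul_add, add_mul, smul_mul_assoc, mul_smul_comm, smul_add]
  rw [S2_comm i j, Nop_comm i j, Nop_S2_comm i j, ← Nop_S2_comm j i]
  abel

lemma Yop_Xop (hpR : (p : R) = 0) (i j : Fin n) :
    Yop p n R h j * Xop p n R i =
      Xop p n R i * Yop p n R h j +
        (if i = j then algebraMap R (Module.End R (MM p n R)) h else 0) := by
  simp only [Yop, add_mul, mul_add, smul_mul_assoc, mul_smul_comm]
  rw [S2_Xop_comm j i]
  rcases eq_or_ne i j with rfl | hij
  · rw [Nop_Xop_self hpR, if_pos rfl, Algebra.algebraMap_eq_smul_one, smul_add]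
    abel
  · rw [Nop_Xop_comm hij, if_neg hij, add_zero]

lemma Yop_pow_p (hp : p.Prime) (hpR : (p : R) = 0) (j : Fin n) :
    Yop p n R h j ^ p = 0 := by
  have hcom : Commute (S2 p n R j) (h • Nop p n R j) :=
    Commute.smul_right ((Nop_S2_comm j j).symm) h
  rw [Yop, hcom.add_pow]
  refine Finset.sum_eq_zero fun m hm => ?_
  have hple : m ≤ p := by
    have := Finset.mem_range.1 hm
    omega
  by_cases hm0 : m = 0
  · subst hm0
    rw [pow_zero, one_mul, Nat.sub_zero, smul_pow, Nop_pow_p hpR j, smul_zero, zero_mul]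
  · by_cases hmp : m = p
    · subst hmp
      rw [S2_pow_p j, zero_mul, zero_mul]
    · obtain ⟨t, ht⟩ := hp.dvd_choose_self hm0 (lt_of_le_of_ne hple hmp)
      have hz : ((p : ℕ) : Module.End R (MM p n R)) = 0 := by
        rw [← map_natCast (algebraMap R (Module.End R (MM p n R))) p, hpR, map_zero]
      rw [ht, Nat.cast_mul, hz, zero_mul, mul_zero]

end RWAux


section FinHelp2
variable {p : ℕ} [NeZero p]
lemma val_zero_sub_one : (((0 : Fin p) - 1 : Fin p) : ℕ) = p - 1 := by
  rw [Fin.sub_def]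
  simp only [Fin.val_one', Fin.val_zero, add_zero]
  rcases eq_or_lt_of_le (Nat.one_le_iff_ne_zero.2 (NeZero.ne p)) with hp1 | hp2
  · simp [← hp1]
  · have h1 : 1 % p = 1 := Nat.mod_eq_of_lt (by omega)
    rw [h1, Nat.mod_eq_of_lt (by omega)]
end FinHelp2

namespace RWAux

variable {p n : ℕ} {R : Type} [CommRing R] {h : R} [NeZero p]

variable (p n R h) in
def opF : Fin n ⊕ Fin n → Module.End R (MM p n R) :=
  Sum.elim (Xop p n R) (Yop p n R h)

variable (p n R h) in
def rep (hp : p.Prime) (hpR : (p : R) = 0) :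
    ReesWeyl p n R h →ₐ[R] Module.End R (MM p n R) :=
  RingQuot.liftAlgHom R ⟨FreeAlgebra.lift R (opF p n R h), by
    intro u w r
    induction r with
    | xx i j =>
        simp only [map_mul, FreeAlgebra.lift_ι_apply, opF, Sum.elim_inl]
        exact Xop_comm i j
    | yy i j =>
        simp only [map_mul, FreeAlgebra.lift_ι_apply, opF, Sum.elim_inr]
        exact Yop_Yop_comm i j
    | yx i j =>
        rcases eq_or_ne i j with rfl | hij
        · simp only [eq_self_iff_true, if_true, map_add, map_mul, FreeAlgebra.lift_ι_apply, opF,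
            Sum.elim_inl, Sum.elim_inr, AlgHom.commutes]
          have := Yop_Xop (h := h) hpR i i
          rw [if_pos rfl] at this
          exact this
        · simp only [if_neg hij, map_add, map_mul, map_zero, FreeAlgebra.lift_ι_apply, opF,
            Sum.elim_inl, Sum.elim_inr]
          have := Yop_Xop (h := h) hpR i j
          rw [if_neg hij] at this
          exact this
    | xp i =>
        simp only [map_pow, FreeAlgebra.lift_ι_apply, opF, Sum.elim_inl, map_zero]
        exact Xop_pow_p i
    | yp j =>
        simp only [map_pow, FreeAlgebra.lift_ι_apply, opF, Sum.elim_inr, map_zero]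
        exact Yop_pow_p hp hpR j⟩

lemma rep_x (hp : p.Prime) (hpR : (p : R) = 0) (i : Fin n) :
    rep p n R h hp hpR (xg p n R h i) = Xop p n R i := by
  rw [xg, reesX, rep, RingQuot.liftAlgHom_mkAlgHom_apply]
  simp [opF]

lemma rep_y (hp : p.Prime) (hpR : (p : R) = 0) (j : Fin n) :
    rep p n R h hp hpR (yg p n R h j) = Yop p n R h j := by
  rw [yg, reesY, rep, RingQuot.liftAlgHom_mkAlgHom_apply]
  simp [opF]

-- monomials
variable (p n R) in
def PM (d : Fin n →₀ ℕ) : MvPolynomial (Fin n) R := monomial d 1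

lemma PM_mul (d e : Fin n →₀ ℕ) : PM n R d * PM n R e = PM n R (d + e) := by
  rw [PM, PM, PM, monomial_mul, one_mul]

lemma X_eq_PM (i : Fin n) : (X i : MvPolynomial (Fin n) R) = PM n R (Finsupp.single i 1) := by
  rw [← pow_one (X i : MvPolynomial (Fin n) R), X_pow_eq_monomial]
  rfl

variable (p) in
def toD (a : Fin n → Fin p) : Fin n →₀ ℕ := Finsupp.equivFunOnFinite.symm fun i => (a i : ℕ)

@[simp] lemma toD_apply (a : Fin n → Fin p) (i : Fin n) : toD p a i = (a i : ℕ) := rfl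

variable (p n R h) in
def mon (ab : Idx p n) : ReesWeyl p n R h :=
  Ex p n R h (PM n R (toD p ab.1)) * Fy p n R h (PM n R (toD p ab.2))

lemma Ex_PM_zero {d : Fin n →₀ ℕ} {i : Fin n} (hd : p ≤ d i) : Ex p n R h (PM n R d) = 0 := by
  have hle : Finsupp.single i p ≤ d := Finsupp.single_le_iff.2 hd
  have hsplit : PM n R d = PM n R (Finsupp.single i p) * PM n R (d - Finsupp.single i p) := by
    rw [PM_mul, add_tsub_cancel_of_le hle]
  rw [hsplit, map_mul]
  have : PM n R (Finsupp.single i p) = (X i : MvPolynomial (Fin n) R) ^ p := by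
    rw [X_pow_eq_monomial]; rfl
  rw [this, map_pow, Ex_X, rel_xp, zero_mul]

lemma Fy_PM_zero {d : Fin n →₀ ℕ} {j : Fin n} (hd : p ≤ d j) : Fy p n R h (PM n R d) = 0 := by
  have hle : Finsupp.single j p ≤ d := Finsupp.single_le_iff.2 hd
  have hsplit : PM n R d = PM n R (Finsupp.single j p) * PM n R (d - Finsupp.single j p) := by
    rw [PM_mul, add_tsub_cancel_of_le hle]
  rw [hsplit, map_mul]
  have : PM n R (Finsupp.single j p) = (X j : MvPolynomial (Fin n) R) ^ p := by
    rw [X_pow_eq_monomial]; rfl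
  rw [this, map_pow, Fy_X, rel_yp, zero_mul]

-- toD bookkeeping
lemma toD_update_add {a : Fin n → Fin p} {i : Fin n} (hne : (a i : ℕ) + 1 ≠ p) :
    toD p (update a i (a i + 1)) = Finsupp.single i 1 + toD p a := by
  ext k
  rcases eq_or_ne k i with rfl | hk
  · simp [update_self, val_add_one_of_ne hne, add_comm]
  · simp [update_of_ne hk, Finsupp.single_apply, Ne.symm hk]

lemma toD_update_sub {a : Fin n → Fin p} {j : Fin n} (h0 : a j ≠ 0) :
    toD p (update a j (a j - 1)) = toD p a - Finsupp.single j 1 := by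
  ext k
  rcases eq_or_ne k j with rfl | hk
  · simp [update_self, val_sub_one h0, Finsupp.single_apply]
  · simp [update_of_ne hk, Finsupp.single_apply, Ne.symm hk, Finsupp.tsub_apply]

-- monomial multiplication lemmas
lemma y_mul_mon (j : Fin n) (ab : Idx p n) :
    yg p n R h j * mon p n R h ab =
      Ex p n R h (PM n R (toD p ab.1)) * Fy p n R h (X j * PM n R (toD p ab.2)) +
        h • (Ex p n R h (pderiv j (PM n R (toD p ab.1))) * Fy p n R h (PM n R (toD p ab.2))) := by
  rw [mon, ← mul_assoc, y_mul_Ex, add_mul, smul_mul_assoc, mul_assoc, map_mul, Fy_X]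

lemma mon_mul_y (j : Fin n) (ab : Idx p n) :
    mon p n R h ab * yg p n R h j =
      Ex p n R h (PM n R (toD p ab.1)) * Fy p n R h (X j * PM n R (toD p ab.2)) := by
  rw [mon, mul_assoc, ← Fy_X (h := h) j, ← map_mul, mul_comm (PM n R (toD p ab.2))]

lemma mon_mul_x (i : Fin n) (ab : Idx p n) :
    mon p n R h ab * xg p n R h i =
      xg p n R h i * mon p n R h ab +
        h • (Ex p n R h (PM n R (toD p ab.1)) * Fy p n R h (pderiv i (PM n R (toD p ab.2)))) := by
  have hx : Ex p n R h (PM n R (toD p ab.1)) * xg p n R h i =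
      xg p n R h i * Ex p n R h (PM n R (toD p ab.1)) := by
    rw [← Ex_X (h := h) i, ← map_mul, ← map_mul, mul_comm]
  rw [mon, mul_assoc, Fy_mul_x, mul_add, mul_smul_comm, ← mul_assoc, ← mul_assoc, hx]

end RWAux


namespace RWAux

variable {p n : ℕ} {R : Type} [CommRing R] {h : R} [NeZero p]

variable (p n) in
def shA (i : Fin n) : Idx p n ≃ Idx p n where
  toFun ab := (update ab.1 i (ab.1 i + 1), ab.2)
  invFun ab := (update ab.1 i (ab.1 i - 1), ab.2)
  left_inv ab := by
    obtain ⟨a, b⟩ := ab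
    simp [update_idem, add_sub_cancel_right]
  right_inv ab := by
    obtain ⟨a, b⟩ := ab
    simp [update_idem, sub_add_cancel]

variable (p n) in
def shB (j : Fin n) : Idx p n ≃ Idx p n where
  toFun ab := (ab.1, update ab.2 j (ab.2 j + 1))
  invFun ab := (ab.1, update ab.2 j (ab.2 j - 1))
  left_inv ab := by
    obtain ⟨a, b⟩ := ab
    simp [update_idem, add_sub_cancel_right]
  right_inv ab := by
    obtain ⟨a, b⟩ := ab
    simp [update_idem, sub_add_cancel]

variable (p n R h) in
def th : MM p n R →ₗ[R] ReesWeyl p n R h where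
  toFun v := ∑ ab : Idx p n, v ab • mon p n R h ab
  map_add' u v := by simp [add_smul, Finset.sum_add_distrib]
  map_smul' c v := by simp [Finset.smul_sum, smul_smul]

lemma th_apply (v : MM p n R) :
    th p n R h v = ∑ ab : Idx p n, v ab • mon p n R h ab := rfl

lemma th_Xop (i : Fin n) (v : MM p n R) :
    th p n R h (Xop p n R i v) = xg p n R h i * th p n R h v := by
  rw [th_apply, th_apply, Finset.mul_sum]
  simp only [mul_smul_comm]
  rw [← Equiv.sum_comp (shA p n i) (fun ab => Xop p n R i v ab • mon p n R h ab)]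
  refine Finset.sum_congr rfl fun ab _ => ?_
  obtain ⟨a, b⟩ := ab
  simp only [shA, Equiv.coe_fn_mk, Xop_apply, update_self, update_idem,
    add_sub_cancel_right, update_eq_self]
  by_cases htop : (a i : ℕ) + 1 = p
  · rw [if_pos (add_one_eq_zero_iff.2 htop), zero_mul, zero_smul]
    have hzero : xg p n R h i * mon p n R h (a, b) = 0 := by
      rw [mon, ← mul_assoc, ← Ex_X (h := h) i, ← map_mul, X_eq_PM, PM_mul]
      have hb : p ≤ ((Finsupp.single i 1 + toD p a : Fin n →₀ ℕ)) i := by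
        simp only [Finsupp.add_apply, Finsupp.single_eq_same, toD_apply]
        omega
      rw [Ex_PM_zero hb, zero_mul]
    rw [hzero, smul_zero]
  · rw [if_neg (fun e => htop (add_one_eq_zero_iff.1 e)), one_mul]
    congr 1
    rw [mon, mon, ← mul_assoc, ← Ex_X (h := h) i, ← map_mul, X_eq_PM, PM_mul]
    simp only
    rw [toD_update_add htop]

lemma th_S2 (j : Fin n) (v : MM p n R) :
    th p n R h (S2 p n R j v) =
      ∑ ab : Idx p n,
        v ab • (Ex p n R h (PM n R (toD p ab.1)) * Fy p n R h (X j * PM n R (toD p ab.2))) := by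
  rw [th_apply]
  rw [← Equiv.sum_comp (shB p n j) (fun ab => S2 p n R j v ab • mon p n R h ab)]
  refine Finset.sum_congr rfl fun ab _ => ?_
  obtain ⟨a, b⟩ := ab
  simp only [shB, Equiv.coe_fn_mk, S2_apply, update_self, update_idem,
    add_sub_cancel_right, update_eq_self]
  by_cases htop : (b j : ℕ) + 1 = p
  · rw [if_pos (add_one_eq_zero_iff.2 htop), zero_mul, zero_smul]
    have hzero : Ex p n R h (PM n R (toD p a)) * Fy p n R h (X j * PM n R (toD p b)) = 0 := by
      rw [X_eq_PM, PM_mul]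
      have hb : p ≤ ((Finsupp.single j 1 + toD p b : Fin n →₀ ℕ)) j := by
        simp only [Finsupp.add_apply, Finsupp.single_eq_same, toD_apply]
        omega
      rw [Fy_PM_zero hb, mul_zero]
    rw [hzero, smul_zero]
  · rw [if_neg (fun e => htop (add_one_eq_zero_iff.1 e)), one_mul]
    congr 1
    rw [mon, X_eq_PM, PM_mul]
    simp only
    rw [toD_update_add htop]

lemma th_Nop (hpR : (p : R) = 0) (j : Fin n) (v : MM p n R) :
    th p n R h (Nop p n R j v) =
      ∑ ab : Idx p n,
        v ab • (Ex p n R h (pderiv j (PM n R (toD p ab.1))) * Fy p n R h (PM n R (toD p ab.2))) := by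
  rw [th_apply]
  rw [← Equiv.sum_comp (shA p n j).symm (fun ab => Nop p n R j v ab • mon p n R h ab)]
  refine Finset.sum_congr rfl fun ab _ => ?_
  obtain ⟨a, b⟩ := ab
  simp only [shA, Equiv.coe_fn_symm_mk, Nop_apply, update_self, update_idem,
    sub_add_cancel, update_eq_self]
  have hpd : pderiv j (PM n R (toD p a)) =
      (monomial (toD p a - Finsupp.single j 1)) (((toD p a) j : ℕ) : R) := by
    rw [PM, pderiv_monomial, one_mul]
  rw [hpd]
  have hsm : (monomial (toD p a - Finsupp.single j 1)) (((toD p a) j : ℕ) : R) =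
      (((toD p a) j : ℕ) : R) • PM n R (toD p a - Finsupp.single j 1) := by
    rw [PM, smul_monomial, smul_eq_mul, mul_one]
  rw [hsm, map_smul, smul_mul_assoc, smul_smul]
  by_cases h0 : a j = 0
  · have hc : ((((a j - 1 : Fin p) : ℕ) + 1 : ℕ) : R) = 0 := by
      rw [h0, val_zero_sub_one, show p - 1 + 1 = p from by
        have := Nat.one_le_iff_ne_zero.2 (NeZero.ne p); omega, hpR]
    have hc' : (((toD p a) j : ℕ) : R) = 0 := by simp [h0]
    rw [hc, hc', zero_mul, mul_zero, zero_smul, zero_smul]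
  · have hvnz : (a j : ℕ) ≠ 0 := by intro e; apply h0; ext; simp [e]
    have hval : (((a j - 1 : Fin p) : ℕ) + 1 : ℕ) = (a j : ℕ) := by
      rw [val_sub_one h0]; omega
    rw [hval, mon]
    simp only [toD_apply]
    rw [toD_update_sub h0, mul_comm]

lemma th_N2 (hpR : (p : R) = 0) (i : Fin n) (v : MM p n R) :
    th p n R h (N2 p n R i v) =
      ∑ ab : Idx p n,
        v ab • (Ex p n R h (PM n R (toD p ab.1)) * Fy p n R h (pderiv i (PM n R (toD p ab.2)))) := by
  rw [th_apply]
  rw [← Equiv.sum_comp (shB p n i).symm (fun ab => N2 p n R i v ab • mon p n R h ab)]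
  refine Finset.sum_congr rfl fun ab _ => ?_
  obtain ⟨a, b⟩ := ab
  simp only [shB, Equiv.coe_fn_symm_mk, N2_apply, update_self, update_idem,
    sub_add_cancel, update_eq_self]
  have hpd : pderiv i (PM n R (toD p b)) =
      (monomial (toD p b - Finsupp.single i 1)) (((toD p b) i : ℕ) : R) := by
    rw [PM, pderiv_monomial, one_mul]
  rw [hpd]
  have hsm : (monomial (toD p b - Finsupp.single i 1)) (((toD p b) i : ℕ) : R) =
      (((toD p b) i : ℕ) : R) • PM n R (toD p b - Finsupp.single i 1) := by
    rw [PM, smul_monomial, smul_eq_mul, mul_one]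
  rw [hsm, map_smul, mul_smul_comm, smul_smul]
  by_cases h0 : b i = 0
  · have hc : ((((b i - 1 : Fin p) : ℕ) + 1 : ℕ) : R) = 0 := by
      rw [h0, val_zero_sub_one, show p - 1 + 1 = p from by
        have := Nat.one_le_iff_ne_zero.2 (NeZero.ne p); omega, hpR]
    have hc' : (((toD p b) i : ℕ) : R) = 0 := by simp [h0]
    rw [hc, hc', zero_mul, mul_zero, zero_smul, zero_smul]
  · have hvnz : (b i : ℕ) ≠ 0 := by intro e; apply h0; ext; simp [e]
    have hval : (((b i - 1 : Fin p) : ℕ) + 1 : ℕ) = (b i : ℕ) := by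
      rw [val_sub_one h0]; omega
    rw [hval, mon]
    simp only [toD_apply]
    rw [toD_update_sub h0, mul_comm]

lemma y_mul_th (hpR : (p : R) = 0) (j : Fin n) (v : MM p n R) :
    yg p n R h j * th p n R h v =
      th p n R h (S2 p n R j v) + h • th p n R h (Nop p n R j v) := by
  rw [th_apply, Finset.mul_sum, th_S2, th_Nop hpR, Finset.smul_sum, ← Finset.sum_add_distrib]
  refine Finset.sum_congr rfl fun ab _ => ?_
  rw [mul_smul_comm, y_mul_mon, smul_add, smul_comm (v ab) h]

lemma th_mul_y (j : Fin n) (v : MM p n R) :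
    th p n R h v * yg p n R h j = th p n R h (S2 p n R j v) := by
  rw [th_apply, Finset.sum_mul, th_S2]
  refine Finset.sum_congr rfl fun ab _ => ?_
  rw [smul_mul_assoc, mon_mul_y]

lemma th_mul_x (hpR : (p : R) = 0) (i : Fin n) (v : MM p n R) :
    th p n R h v * xg p n R h i =
      xg p n R h i * th p n R h v + h • th p n R h (N2 p n R i v) := by
  rw [th_apply, Finset.sum_mul, th_N2 hpR, Finset.mul_sum, Finset.smul_sum,
    ← Finset.sum_add_distrib]
  refine Finset.sum_congr rfl fun ab _ => ?_
  rw [smul_mul_assoc, mon_mul_x, mul_smul_comm, smul_comm h, smul_add]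

end RWAux


namespace RWAux

variable {p n : ℕ} {R : Type} [CommRing R] {h : R} [NeZero p]

lemma adjoin_top :
    Algebra.adjoin R (Set.range (xg p n R h) ∪ Set.range (yg p n R h)) = ⊤ := by
  have himg : Set.range (xg p n R h) ∪ Set.range (yg p n R h) =
      ⇑(RingQuot.mkAlgHom R (ReesWeylRel p n R h)) '' Set.range (FreeAlgebra.ι R) := by
    ext z
    constructor
    · rintro (⟨i, rfl⟩ | ⟨j, rfl⟩)
      · exact ⟨FreeAlgebra.ι R (Sum.inl i), ⟨Sum.inl i, rfl⟩, rfl⟩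
      · exact ⟨FreeAlgebra.ι R (Sum.inr j), ⟨Sum.inr j, rfl⟩, rfl⟩
    · rintro ⟨w, ⟨s, rfl⟩, rfl⟩
      rcases s with i | j
      · exact Or.inl ⟨i, rfl⟩
      · exact Or.inr ⟨j, rfl⟩
  rw [himg, ← AlgHom.map_adjoin, FreeAlgebra.adjoin_range_ι, Algebra.map_top,
    AlgHom.range_eq_top]
  exact RingQuot.mkAlgHom_surjective R _

lemma th_Yop (hpR : (p : R) = 0) (j : Fin n) (v : MM p n R) :
    th p n R h (Yop p n R h j v) = yg p n R h j * th p n R h v := by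
  rw [Yop, LinearMap.add_apply, LinearMap.smul_apply, map_add, map_smul, y_mul_th hpR]

lemma rep_th (hp : p.Prime) (hpR : (p : R) = 0) (u : ReesWeyl p n R h) :
    ∀ v : MM p n R, th p n R h (rep p n R h hp hpR u v) = u * th p n R h v := by
  have hmem : u ∈ Algebra.adjoin R (Set.range (xg p n R h) ∪ Set.range (yg p n R h)) := by
    rw [adjoin_top]
    exact Algebra.mem_top
  induction hmem using Algebra.adjoin_induction with
  | mem z hz =>
      rcases hz with ⟨i, rfl⟩ | ⟨j, rfl⟩
      · intro v
        rw [rep_x hp hpR, th_Xop]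
      · intro v
        rw [rep_y hp hpR, th_Yop hpR]
  | algebraMap r =>
      intro v
      rw [AlgHom.commutes, Module.algebraMap_end_apply, map_smul, Algebra.smul_def]
  | add x y hx hy ihx ihy =>
      intro v
      rw [map_add, LinearMap.add_apply, map_add, add_mul, ihx, ihy]
  | mul x y hx hy ihx ihy =>
      intro v
      rw [map_mul, Module.End.mul_apply, ihx, ihy, mul_assoc]

variable (p n R) in
def dlt (ab : Idx p n) : MM p n R := fun cd => if cd = ab then 1 else 0

lemma th_dlt (ab : Idx p n) : th p n R h (dlt p n R ab) = mon p n R h ab := by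
  rw [th_apply]
  rw [Finset.sum_eq_single ab (fun cd _ hne => by simp [dlt, hne])
    (fun habs => absurd (Finset.mem_univ ab) habs)]
  simp [dlt]

lemma toD_zero : toD p (0 : Fin n → Fin p) = 0 := by
  ext k
  simp [toD]

lemma mon_zero : mon p n R h (0, 0) = 1 := by
  rw [mon]
  simp only [toD_zero]
  rw [PM]
  rw [monomial_zero']
  simp

lemma th_rep_vac (hp : p.Prime) (hpR : (p : R) = 0) (u : ReesWeyl p n R h) :
    th p n R h (rep p n R h hp hpR u (dlt p n R (0, 0))) = u := by
  rw [rep_th hp hpR, th_dlt, mon_zero, mul_one]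

lemma Xop_dlt {a b : Fin n → Fin p} {i : Fin n} (hlt : (a i : ℕ) + 1 < p) :
    Xop p n R i (dlt p n R (a, b)) = dlt p n R (update a i (a i + 1), b) := by
  have hne : (a i + 1 : Fin p) ≠ 0 := fun e => by
    have := add_one_eq_zero_iff.1 e
    omega
  funext cd
  obtain ⟨c, d⟩ := cd
  simp only [Xop_apply, dlt]
  by_cases hc : ((c, d) : Idx p n) = (update a i (a i + 1), b)
  · have hc1 : c = update a i (a i + 1) := congrArg Prod.fst hc
    have hc2 : d = b := congrArg Prod.snd hc
    subst hc1; subst hc2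
    rw [if_pos hc]
    simp only [update_self, update_idem, add_sub_cancel_right, update_eq_self, if_neg hne,
      one_mul]
    simp
  · rw [if_neg hc]
    by_cases hc0 : c i = 0
    · rw [if_pos hc0, zero_mul]
    · rw [if_neg hc0, one_mul, if_neg]
      intro he
      apply hc
      have h1 : update c i (c i - 1) = a := congrArg Prod.fst he
      have h2 : d = b := congrArg Prod.snd he
      have hai : a i = c i - 1 := by rw [← h1, update_self]
      have hci : c i = a i + 1 := by rw [hai, sub_add_cancel]
      have hcu : c = update a i (a i + 1) := by
        calc c = update (update c i (c i - 1)) i (c i) := by rw [update_idem, update_eq_self]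
          _ = update a i (a i + 1) := by rw [h1, hci]
      exact Prod.ext hcu h2

lemma Yop_dlt (hpR : (p : R) = 0) {b : Fin n → Fin p} {j : Fin n} (hlt : (b j : ℕ) + 1 < p) :
    Yop p n R h j (dlt p n R (0, b)) = dlt p n R (0, update b j (b j + 1)) := by
  have hne : (b j + 1 : Fin p) ≠ 0 := fun e => by
    have := add_one_eq_zero_iff.1 e
    omega
  funext cd
  obtain ⟨c, d⟩ := cd
  simp only [Yop, LinearMap.add_apply, LinearMap.smul_apply, Pi.add_apply, Pi.smul_apply,
    S2_apply, Nop_apply, smul_eq_mul, dlt]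
  have h2 : (((c j : ℕ) + 1 : ℕ) : R) *
      (if ((update c j (c j + 1), d) : Idx p n) = (0, b) then (1:R) else 0) = 0 := by
    by_cases hz : ((update c j (c j + 1), d) : Idx p n) = (0, b)
    · have hcz : c j + 1 = 0 := by
        have := congrFun (congrArg Prod.fst hz) j
        simpa [update_self] using this
      rw [if_pos hz, mul_one, add_one_eq_zero_iff.1 hcz, hpR]
    · rw [if_neg hz, mul_zero]
  rw [h2, mul_zero, add_zero]
  by_cases hc : ((c, d) : Idx p n) = (0, update b j (b j + 1))
  · have hc1 : c = 0 := congrArg Prod.fst hc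
    have hc2 : d = update b j (b j + 1) := congrArg Prod.snd hc
    subst hc1; subst hc2
    rw [if_pos hc]
    simp only [update_self, update_idem, add_sub_cancel_right, update_eq_self, if_neg hne,
      one_mul]
    simp
  · rw [if_neg hc]
    by_cases hc0 : d j = 0
    · rw [if_pos hc0, zero_mul]
    · rw [if_neg hc0, one_mul, if_neg]
      intro he
      apply hc
      have h1 : update d j (d j - 1) = b := congrArg Prod.snd he
      have h2' : c = 0 := congrArg Prod.fst he
      have hbj : b j = d j - 1 := by rw [← h1, update_self]
      have hdj : d j = b j + 1 := by rw [hbj, sub_add_cancel]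
      have hdu : d = update b j (b j + 1) := by
        calc d = update (update d j (d j - 1)) j (d j) := by rw [update_idem, update_eq_self]
          _ = update b j (b j + 1) := by rw [h1, hdj]
      exact Prod.ext h2' hdu

open Fin.NatCast in
lemma Xop_pow_dlt (i : Fin n) (k : ℕ) :
    ∀ (a b : Fin n → Fin p), (a i : ℕ) + k < p →
      (Xop p n R i ^ k) (dlt p n R (a, b)) = dlt p n R (update a i (a i + (k : Fin p)), b) := by
  induction k with
  | zero =>
      intro a b _
      simp only [pow_zero, Module.End.one_apply, Nat.cast_zero, add_zero, update_eq_self]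
  | succ k ih =>
      intro a b hk
      rw [pow_succ, Module.End.mul_apply, Xop_dlt (by omega)]
      have hval : ((update a i (a i + 1)) i : ℕ) + k < p := by
        rw [update_self, val_add_one_of_ne (by omega)]
        omega
      rw [ih _ _ hval, update_self, update_idem]
      congr 2
      push_cast
      abel

open Fin.NatCast in
lemma Yop_pow_dlt (hpR : (p : R) = 0) (j : Fin n) (k : ℕ) :
    ∀ (b : Fin n → Fin p), (b j : ℕ) + k < p →
      (Yop p n R h j ^ k) (dlt p n R (0, b)) =
        dlt p n R (0, update b j (b j + (k : Fin p))) := by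
  induction k with
  | zero =>
      intro b _
      simp only [pow_zero, Module.End.one_apply, Nat.cast_zero, add_zero, update_eq_self]
  | succ k ih =>
      intro b hk
      rw [pow_succ, Module.End.mul_apply, Yop_dlt hpR (by omega)]
      have hval : ((update b j (b j + 1)) j : ℕ) + k < p := by
        rw [update_self, val_add_one_of_ne (by omega)]
        omega
      rw [ih _ hval, update_self, update_idem]
      congr 3
      push_cast
      abel

end RWAux


namespace RWAux

variable {p n : ℕ} {R : Type} [CommRing R] {h : R} [NeZero p]

open Fin.NatCast in
lemma rep_Ex_dlt (hp : p.Prime) (hpR : (p : R) = 0) (d : Fin n →₀ ℕ) :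
    ∀ a b : Fin n → Fin p, (∀ i, (a i : ℕ) + d i < p) →
      rep p n R h hp hpR (Ex p n R h (PM n R d)) (dlt p n R (a, b)) =
        dlt p n R (fun i => a i + ((d i : ℕ) : Fin p), b) := by
  induction d using Finsupp.induction with
  | zero =>
      intro a b _
      have hPM : PM n R (0 : Fin n →₀ ℕ) = 1 := by
        rw [PM, monomial_zero']
        simp
      rw [hPM, map_one, map_one, Module.End.one_apply]
      refine congrArg (dlt p n R) (Prod.ext ?_ rfl)
      funext i
      dsimp only
      simp
  | single_add i k f hif hk ih =>
      intro a b hb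
      have hPM : PM n R ((Finsupp.single i k) + f) =
          (X i : MvPolynomial (Fin n) R) ^ k * PM n R f := by
        rw [X_pow_eq_monomial]
        exact (PM_mul _ _).symm
      rw [hPM, map_mul, map_mul, map_pow, map_pow, Ex_X, rep_x hp hpR, Module.End.mul_apply]
      have hbf : ∀ i', (a i' : ℕ) + f i' < p := fun i' => by
        have h1 := hb i'
        rw [Finsupp.add_apply] at h1
        omega
      rw [ih _ _ hbf]
      have hfi : f i = 0 := Finsupp.notMem_support_iff.1 hif
      have hval : (((fun i' => a i' + ((f i' : ℕ) : Fin p)) i : Fin p) : ℕ) + k < p := by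
        have h1 := hb i
        rw [Finsupp.add_apply, Finsupp.single_eq_same] at h1
        simp only [hfi, Nat.cast_zero, add_zero]
        omega
      rw [Xop_pow_dlt i k _ b hval]
      refine congrArg (dlt p n R) (Prod.ext ?_ rfl)
      funext i'
      dsimp only
      rcases eq_or_ne i' i with rfl | hne
      · rw [update_self, Finsupp.add_apply, Finsupp.single_eq_same, hfi]
        simp only [Nat.cast_zero, add_zero, Nat.cast_add]
      · rw [update_of_ne hne, Finsupp.add_apply, Finsupp.single_apply, if_neg (Ne.symm hne),
          zero_add]

open Fin.NatCast in
lemma rep_Fy_dlt (hp : p.Prime) (hpR : (p : R) = 0) (d : Fin n →₀ ℕ) :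
    ∀ b : Fin n → Fin p, (∀ j, (b j : ℕ) + d j < p) →
      rep p n R h hp hpR (Fy p n R h (PM n R d)) (dlt p n R (0, b)) =
        dlt p n R (0, fun j => b j + ((d j : ℕ) : Fin p)) := by
  induction d using Finsupp.induction with
  | zero =>
      intro b _
      have hPM : PM n R (0 : Fin n →₀ ℕ) = 1 := by
        rw [PM, monomial_zero']
        simp
      rw [hPM, map_one, map_one, Module.End.one_apply]
      refine congrArg (dlt p n R) (Prod.ext rfl ?_)
      funext j
      dsimp only
      simp
  | single_add j k f hjf hk ih =>
      intro b hb
      have hPM : PM n R ((Finsupp.single j k) + f) =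
          (X j : MvPolynomial (Fin n) R) ^ k * PM n R f := by
        rw [X_pow_eq_monomial]
        exact (PM_mul _ _).symm
      rw [hPM, map_mul, map_mul, map_pow, map_pow, Fy_X, rep_y hp hpR, Module.End.mul_apply]
      have hbf : ∀ j', (b j' : ℕ) + f j' < p := fun j' => by
        have h1 := hb j'
        rw [Finsupp.add_apply] at h1
        omega
      rw [ih _ hbf]
      have hfj : f j = 0 := Finsupp.notMem_support_iff.1 hjf
      have hval : (((fun j' => b j' + ((f j' : ℕ) : Fin p)) j : Fin p) : ℕ) + k < p := by
        have h1 := hb j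
        rw [Finsupp.add_apply, Finsupp.single_eq_same] at h1
        simp only [hfj, Nat.cast_zero, add_zero]
        omega
      rw [Yop_pow_dlt hpR j k _ hval]
      refine congrArg (dlt p n R) (Prod.ext rfl ?_)
      funext j'
      dsimp only
      rcases eq_or_ne j' j with rfl | hne
      · rw [update_self, Finsupp.add_apply, Finsupp.single_eq_same, hfj]
        simp only [Nat.cast_zero, add_zero, Nat.cast_add]
      · rw [update_of_ne hne, Finsupp.add_apply, Finsupp.single_apply, if_neg (Ne.symm hne),
          zero_add]

open Fin.NatCast in
lemma rep_mon_vac (hp : p.Prime) (hpR : (p : R) = 0) (ab : Idx p n) :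
    rep p n R h hp hpR (mon p n R h ab) (dlt p n R (0, 0)) = dlt p n R ab := by
  obtain ⟨a, b⟩ := ab
  rw [mon, map_mul, Module.End.mul_apply]
  have h1 : rep p n R h hp hpR (Fy p n R h (PM n R (toD p b))) (dlt p n R (0, 0)) =
      dlt p n R (0, b) := by
    rw [rep_Fy_dlt hp hpR (toD p b) 0 (fun j => by
      simp only [Pi.zero_apply, Fin.val_zero, zero_add, toD_apply]
      exact (b j).isLt)]
    refine congrArg (dlt p n R) (Prod.ext rfl ?_)
    funext j
    dsimp only
    simp [Fin.cast_val_eq_self]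
  rw [h1, rep_Ex_dlt hp hpR (toD p a) 0 b (fun i => by
      simp only [Pi.zero_apply, Fin.val_zero, zero_add, toD_apply]
      exact (a i).isLt)]
  refine congrArg (dlt p n R) (Prod.ext ?_ rfl)
  funext i
  dsimp only
  simp [Fin.cast_val_eq_self]

lemma rep_th_inv (hp : p.Prime) (hpR : (p : R) = 0) (v : MM p n R) :
    rep p n R h hp hpR (th p n R h v) (dlt p n R (0, 0)) = v := by
  rw [th_apply, map_sum]
  funext cd
  rw [LinearMap.sum_apply, Finset.sum_apply]
  simp only [map_smul, LinearMap.smul_apply, rep_mon_vac hp hpR, Pi.smul_apply, smul_eq_mul]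
  simp only [dlt, mul_ite, mul_one, mul_zero, Finset.sum_ite_eq, Finset.mem_univ, if_true]

lemma th_inj (hp : p.Prime) (hpR : (p : R) = 0) :
    Function.Injective (th p n R h) := by
  intro v w e
  rw [← rep_th_inv (h := h) hp hpR v, ← rep_th_inv (h := h) hp hpR w, e]

lemma algebraMap_inj (hp : p.Prime) (hpR : (p : R) = 0) :
    Function.Injective (algebraMap R (ReesWeyl p n R h)) := by
  intro r s e
  have := congrArg (fun u => rep p n R h hp hpR u (dlt p n R (0, 0)) ((0, 0) : Idx p n)) e
  simpa [AlgHom.commutes, Module.algebraMap_end_apply, dlt] using this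

lemma cast_coprime_unit (hp : p.Prime) (hpR : (p : R) = 0) {k : ℕ} (hkp : k < p)
    (hk : k ≠ 0) : ∃ c : R, c * (k : R) = 1 := by
  have hnd : ¬ p ∣ k := fun hd => by
    have := Nat.le_of_dvd (Nat.pos_of_ne_zero hk) hd
    omega
  have hcop : Nat.gcd p k = 1 := (Nat.Prime.coprime_iff_not_dvd hp).2 hnd
  have hb := Nat.gcd_eq_gcd_ab p k
  rw [hcop] at hb
  refine ⟨((Nat.gcdB p k : ℤ) : R), ?_⟩
  have hcast := congrArg (fun t : ℤ => ((t : ℤ) : R)) hb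
  push_cast at hcast
  rw [hpR, zero_mul, zero_add] at hcast
  rw [mul_comm]
  exact hcast.symm

end RWAux


namespace RWAux

variable {p n : ℕ} {R : Type} [CommRing R] {h : R} [NeZero p]

lemma center_eq_bot (hp : p.Prime) (hpR : (p : R) = 0) (hh : h ∈ nonZeroDivisors R) :
    Subalgebra.center R (ReesWeyl p n R h) = ⊥ := by
  refine le_antisymm ?_ bot_le
  intro z hz
  rw [Subalgebra.mem_center_iff] at hz
  set v : MM p n R := rep p n R h hp hpR z (dlt p n R (0, 0)) with hv
  have hzv : z = th p n R h v := (th_rep_vac hp hpR z).symm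
  -- the coefficient-killing principle
  have hkill : ∀ (r : R) (k : ℕ), k < p → k ≠ 0 → h * ((k : ℕ) : R) * r = 0 → r = 0 := by
    intro r k hkp hk0 he
    obtain ⟨c, hc⟩ := cast_coprime_unit (R := R) hp hpR hkp hk0
    have hzero : r * h = 0 := by
      calc r * h = (c * ((k : ℕ) : R)) * (r * h) := by rw [hc, one_mul]
        _ = c * (h * ((k : ℕ) : R) * r) := by ring
        _ = c * 0 := by rw [he]
        _ = 0 := mul_zero c
    exact (mem_nonZeroDivisors_iff.1 hh).2 r hzero
  -- y-commutators kill first-component-positive coefficients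
  have hNv : ∀ j : Fin n, h • Nop p n R j v = 0 := by
    intro j
    have h1 := y_mul_th (h := h) hpR j v
    rw [← hzv] at h1
    have h2 := th_mul_y (h := h) j v
    rw [← hzv] at h2
    rw [← h2, hz (yg p n R h j)] at h1
    have h3 : h • th p n R h (Nop p n R j v) = 0 := by
      have := h1.symm
      rwa [add_eq_left] at this
    rw [← map_smul] at h3
    exact th_inj hp hpR (h3.trans (map_zero (th p n R h)).symm)
  have hva : ∀ (a b : Fin n → Fin p) (j : Fin n), a j ≠ 0 → v (a, b) = 0 := by
    intro a b j hj
    have hpt := congrFun (hNv j) (update a j (a j - 1), b)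
    simp only [Pi.smul_apply, Nop_apply, update_self, update_idem, sub_add_cancel,
      update_eq_self, smul_eq_mul, Pi.zero_apply] at hpt
    have hvnz : (a j : ℕ) ≠ 0 := by intro e; apply hj; ext; simp [e]
    rw [val_sub_one hj, show (a j : ℕ) - 1 + 1 = (a j : ℕ) from by omega] at hpt
    exact hkill _ (a j : ℕ) (a j).isLt hvnz (by rw [mul_assoc]; exact hpt)
  -- x-commutators kill second-component-positive coefficients
  have hN2v : ∀ i : Fin n, h • N2 p n R i v = 0 := by
    intro i
    have h1 := th_mul_x (h := h) hpR i v
    rw [← hzv] at h1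
    rw [← hz (xg p n R h i)] at h1
    have h3 : h • th p n R h (N2 p n R i v) = 0 := by
      have := h1.symm
      rwa [add_eq_left] at this
    rw [← map_smul] at h3
    exact th_inj hp hpR (h3.trans (map_zero (th p n R h)).symm)
  have hvb : ∀ (a b : Fin n → Fin p) (i : Fin n), b i ≠ 0 → v (a, b) = 0 := by
    intro a b i hi
    have hpt := congrFun (hN2v i) (a, update b i (b i - 1))
    simp only [Pi.smul_apply, N2_apply, update_self, update_idem, sub_add_cancel,
      update_eq_self, smul_eq_mul, Pi.zero_apply] at hpt
    have hvnz : (b i : ℕ) ≠ 0 := by intro e; apply hi; ext; simp [e]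
    rw [val_sub_one hi, show (b i : ℕ) - 1 + 1 = (b i : ℕ) from by omega] at hpt
    exact hkill _ (b i : ℕ) (b i).isLt hvnz (by rw [mul_assoc]; exact hpt)
  rw [Algebra.mem_bot]
  refine ⟨v (0, 0), ?_⟩
  rw [hzv, th_apply, Finset.sum_eq_single ((0, 0) : Idx p n) ?_
    (fun habs => absurd (Finset.mem_univ _) habs)]
  · rw [mon_zero, Algebra.algebraMap_eq_smul_one]
  · intro ab _ hne
    obtain ⟨a, b⟩ := ab
    have hvz : v (a, b) = 0 := by
      by_cases ha : a = 0
      · have hbz : b ≠ 0 := fun e => hne (by rw [ha, e])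
        obtain ⟨i, hi⟩ := Function.ne_iff.1 hbz
        exact hvb a b i hi
      · obtain ⟨j, hj⟩ := Function.ne_iff.1 ha
        exact hva a b j hj
    rw [hvz, zero_smul]

end RWAux

/-- if `h` is a nonzerodivisor of `R` (with `p·R = 0`, `p` an odd prime), then
the center of the Rees reduced Weyl algebra `A(R)` is exactly the image of `R`, and the
kernel of the conjugation homomorphism `Ad : A(R)ˣ → Aut_{R-alg}(A(R))` is `Rˣ`. -/
theorem center_of_rees_weyl_algebra_and_kernel_of_Ad
    (p n : ℕ) (hp : p.Prime) (hodd : p ≠ 2) (hn : 1 ≤ n)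
    (R : Type) [CommRing R] (hpR : (p : R) = 0) (h : R) (hh : h ∈ nonZeroDivisors R) :
    Subalgebra.center R (ReesWeyl p n R h) = ⊥ ∧
    ∀ u : (ReesWeyl p n R h)ˣ,
      (∀ m : ReesWeyl p n R h, (u : ReesWeyl p n R h) * m * ((u⁻¹ : (ReesWeyl p n R h)ˣ) : ReesWeyl p n R h) = m) ↔
        ∃ r : Rˣ, (u : ReesWeyl p n R h) = algebraMap R (ReesWeyl p n R h) (r : R) := by
  haveI : NeZero p := ⟨hp.pos.ne'⟩
  have hcenter := RWAux.center_eq_bot (h := h) (n := n) hp hpR hh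
  refine ⟨hcenter, fun u => ⟨?_, ?_⟩⟩
  · intro hcomm
    -- u is central
    have hucen : (u : ReesWeyl p n R h) ∈ Subalgebra.center R (ReesWeyl p n R h) := by
      rw [Subalgebra.mem_center_iff]
      intro m
      have e := hcomm m
      calc m * (u : ReesWeyl p n R h)
          = ((u : ReesWeyl p n R h) * m * ((u⁻¹ : (ReesWeyl p n R h)ˣ) : ReesWeyl p n R h)) *
              (u : ReesWeyl p n R h) := by rw [e]
        _ = (u : ReesWeyl p n R h) * m *
              (((u⁻¹ : (ReesWeyl p n R h)ˣ) : ReesWeyl p n R h) * (u : ReesWeyl p n R h)) := by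
              rw [mul_assoc]
        _ = (u : ReesWeyl p n R h) * m := by rw [Units.inv_mul, mul_one]
    have huinv : ((u⁻¹ : (ReesWeyl p n R h)ˣ) : ReesWeyl p n R h) ∈
        Subalgebra.center R (ReesWeyl p n R h) := by
      rw [Subalgebra.mem_center_iff] at hucen ⊢
      intro m
      have hum : ((u⁻¹ : (ReesWeyl p n R h)ˣ) : ReesWeyl p n R h) *
          ((u : ReesWeyl p n R h) * m) = m := by
        rw [← mul_assoc, Units.inv_mul, one_mul]
      calc m * ((u⁻¹ : (ReesWeyl p n R h)ˣ) : ReesWeyl p n R h)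
          = (((u⁻¹ : (ReesWeyl p n R h)ˣ) : ReesWeyl p n R h) * ((u : ReesWeyl p n R h) * m)) *
              ((u⁻¹ : (ReesWeyl p n R h)ˣ) : ReesWeyl p n R h) := by rw [hum]
        _ = ((u⁻¹ : (ReesWeyl p n R h)ˣ) : ReesWeyl p n R h) *
              (((u : ReesWeyl p n R h) * m) * ((u⁻¹ : (ReesWeyl p n R h)ˣ) : ReesWeyl p n R h)) := by
            rw [mul_assoc, mul_assoc]
        _ = ((u⁻¹ : (ReesWeyl p n R h)ˣ) : ReesWeyl p n R h) *
              ((m * (u : ReesWeyl p n R h)) * ((u⁻¹ : (ReesWeyl p n R h)ˣ) : ReesWeyl p n R h)) := by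
            rw [← hucen m]
        _ = ((u⁻¹ : (ReesWeyl p n R h)ˣ) : ReesWeyl p n R h) * m := by
            rw [mul_assoc, Units.mul_inv, mul_one]
    rw [hcenter, Algebra.mem_bot] at hucen huinv
    obtain ⟨r, hr⟩ := hucen
    obtain ⟨s, hs⟩ := huinv
    have hrs : r * s = 1 := by
      apply RWAux.algebraMap_inj (h := h) (n := n) hp hpR
      rw [map_mul, map_one, hr, hs, Units.mul_inv]
    refine ⟨Units.mkOfMulEqOne r s hrs, hr.symm⟩
  · rintro ⟨r, hr⟩ m
    have hcomm : (u : ReesWeyl p n R h) * m = m * (u : ReesWeyl p n R h) := by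
      rw [hr, Algebra.commutes]
    rw [hcomm, mul_assoc, Units.mul_inv, mul_one]
end
end

section
/- Let p be a prime and A an associative ring with p·A = 0, and let h ∈ A be a central element such that the commutator of any two elements of A lies in hA. Then for all a, b ∈ A one has (a + hb)^p ≡ a^p (mod h^p A). -/
open Polynomial Finset

private lemma sum_conj_eq {R : Type} [Ring R] (u v : R) (n : ℕ) :
    ∑ j ∈ range (n + 1), u ^ j * v * u ^ (n - j)
      = ∑ m ∈ range (n + 1),
          (n + 1).choose (m + 1) • ((fun w => u * w - w * u)^[m] v * u ^ (n - m)) := by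
  induction n with
  | zero => simp
  | succ n ih =>
    set δ : R → R := fun w => u * w - w * u with hδ
    have step1 : ∑ j ∈ range (n + 2), u ^ j * v * u ^ (n + 1 - j)
        = u * ∑ j ∈ range (n + 1), u ^ j * v * u ^ (n - j) + v * u ^ (n + 1) := by
      rw [Finset.sum_range_succ']
      simp only [pow_zero, one_mul, Nat.succ_sub_succ, Finset.mul_sum, pow_succ', mul_assoc,
        Nat.sub_zero]
    rw [step1, ih, Finset.mul_sum]
    have key : ∀ m ∈ range (n + 1),
        u * ((n + 1).choose (m + 1) • (δ^[m] v * u ^ (n - m)))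
          = (n + 1).choose (m + 1) • (δ^[m] v * u ^ (n + 1 - m))
            + (n + 1).choose (m + 1) • (δ^[m + 1] v * u ^ (n - m)) := by
      intro m hm
      rw [Finset.mem_range] at hm
      have h1 : n + 1 - m = (n - m) + 1 := by omega
      rw [mul_smul_comm, ← smul_add]
      congr 1
      have hit : δ^[m + 1] v = u * δ^[m] v - δ^[m] v * u := by
        rw [Function.iterate_succ_apply']
      have h2 : u * δ^[m] v = δ^[m] v * u + δ^[m + 1] v := by rw [hit]; abel
      rw [← mul_assoc, h2, add_mul, h1]
      congr 1
      rw [mul_assoc, ← pow_succ']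
    rw [Finset.sum_congr rfl key, Finset.sum_add_distrib]
    have pascal : ∀ m : ℕ, (n + 2).choose (m + 1 + 1)
        = (n + 1).choose (m + 1) + (n + 1).choose (m + 1 + 1) :=
      fun m => Nat.choose_succ_succ (n + 1) (m + 1)
    have rhs : ∑ m ∈ range (n + 2),
        (n + 2).choose (m + 1) • (δ^[m] v * u ^ (n + 1 - m))
        = ∑ m ∈ range (n + 1),
            ((n + 1).choose (m + 1) + (n + 1).choose (m + 1 + 1))
              • (δ^[m + 1] v * u ^ (n - m))
          + (n + 2) • (v * u ^ (n + 1)) := by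
      rw [Finset.sum_range_succ']
      congr 1
      · refine Finset.sum_congr rfl fun m hm => ?_
        rw [pascal m, Nat.succ_sub_succ]
      · have h0 : (n + 2).choose (0 + 1) = n + 2 := Nat.choose_one_right (n + 2)
        rw [h0]
        norm_num
    rw [rhs]
    have split : ∑ m ∈ range (n + 1),
        ((n + 1).choose (m + 1) + (n + 1).choose (m + 1 + 1))
          • (δ^[m + 1] v * u ^ (n - m))
        = ∑ m ∈ range (n + 1), (n + 1).choose (m + 1) • (δ^[m + 1] v * u ^ (n - m))
          + ∑ m ∈ range (n + 1), (n + 1).choose (m + 1 + 1) • (δ^[m + 1] v * u ^ (n - m)) := by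
      rw [← Finset.sum_add_distrib]
      exact Finset.sum_congr rfl fun m _ => add_smul _ _ _
    rw [split]
    have reindex : ∑ m ∈ range (n + 1),
        (n + 1).choose (m + 1 + 1) • (δ^[m + 1] v * u ^ (n - m))
        = ∑ m ∈ range (n + 1), (n + 1).choose (m + 1) • (δ^[m] v * u ^ (n + 1 - m))
          - (n + 1) • (v * u ^ (n + 1)) := by
      have e1 : ∑ m ∈ range (n + 2), (n + 1).choose (m + 1) • (δ^[m] v * u ^ (n + 1 - m))
          = ∑ m ∈ range (n + 1), (n + 1).choose (m + 1 + 1) • (δ^[m + 1] v * u ^ (n - m))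
            + (n + 1) • (v * u ^ (n + 1)) := by
        rw [Finset.sum_range_succ']
        congr 1
        · refine Finset.sum_congr rfl fun m hm => ?_
          rw [Nat.succ_sub_succ]
        · have h0 : (n + 1).choose (0 + 1) = n + 1 := Nat.choose_one_right (n + 1)
          rw [h0]
          norm_num
      have e2 : ∑ m ∈ range (n + 2), (n + 1).choose (m + 1) • (δ^[m] v * u ^ (n + 1 - m))
          = ∑ m ∈ range (n + 1), (n + 1).choose (m + 1) • (δ^[m] v * u ^ (n + 1 - m)) := by
        rw [Finset.sum_range_succ, Nat.choose_succ_self, zero_smul, add_zero]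
      rw [← e2, e1]
      abel
    rw [reindex]
    have hsucc : (n + 2) • (v * u ^ (n + 1))
        = (n + 1) • (v * u ^ (n + 1)) + v * u ^ (n + 1) := succ_nsmul _ (n + 1)
    rw [hsucc]
    abel

private lemma derivative_pow_noncomm {R : Type} [Ring R] (f : R[X]) (n : ℕ) :
    derivative (f ^ n) = ∑ j ∈ range n, f ^ j * derivative f * f ^ (n - 1 - j) := by
  induction n with
  | zero => simp
  | succ n ih =>
    rw [pow_succ, derivative_mul, ih, Finset.sum_mul, Finset.sum_range_succ]
    congr 1
    · refine Finset.sum_congr rfl fun j hj => ?_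
      rw [Finset.mem_range] at hj
      have e : n + 1 - 1 - j = (n - 1 - j) + 1 := by omega
      rw [e, pow_succ, ← mul_assoc]
    · simp

theorem pow_p_add_h_mul_congr
    (p : ℕ) (hp : p.Prime) (A : Type) [Ring A] (hpA : (p : A) = 0) (h : A)
    (hcentral : ∀ x : A, h * x = x * h)
    (hcommutator : ∀ x y : A, ∃ c : A, x * y - y * x = h * c)
    (a b : A) :
    ∃ c : A, (a + h * b) ^ p - a ^ p = h ^ p * c := by
  classical
  set x : A := h * b with hxdef
  have hpowc : ∀ (k : ℕ) (y : A), h ^ k * y = y * h ^ k := fun k y =>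
    (Commute.pow_left (hcentral y) k)
  have Ssum : ∀ {ι : Type} (k : ℕ) (s : Finset ι) (f : ι → A),
      (∀ i ∈ s, ∃ c, f i = h ^ k * c) → ∃ c, ∑ i ∈ s, f i = h ^ k * c := by
    intro ι k s f hf
    refine Finset.sum_induction f (fun z => ∃ c, z = h ^ k * c) ?_ ⟨0, by simp⟩ hf
    rintro z w ⟨c, rfl⟩ ⟨d, rfl⟩
    exact ⟨c + d, (mul_add _ _ _).symm⟩
  have Sstep : ∀ (k : ℕ) (y z : A), (∃ c, z = h ^ k * c) →
      ∃ c, y * z - z * y = h ^ (k + 1) * c := by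
    rintro k y z ⟨c, rfl⟩
    obtain ⟨d, hd⟩ := hcommutator y c
    refine ⟨d, ?_⟩
    have e1 : y * (h ^ k * c) = h ^ k * (y * c) := by
      rw [← mul_assoc, ← hpowc k y, mul_assoc]
    rw [e1, mul_assoc, ← mul_sub, hd, ← mul_assoc, pow_succ]
  set U : A[X] := C a + C x * X with hU
  set δ : A[X] → A[X] := fun w => U * w - w * U with hδ
  have hiter : ∀ m : ℕ, ∀ n : ℕ, ∃ c, ((δ^[m]) (C x)).coeff n = h ^ (m + 1) * c := by
    intro m
    induction m with
    | zero =>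
      intro n
      rcases Nat.eq_zero_or_pos n with rfl | hn
      · exact ⟨b, by simp [hxdef]⟩
      · exact ⟨0, by simp [coeff_C, Nat.pos_iff_ne_zero.mp hn]⟩
    | succ m ih =>
      intro n
      have hit : (δ^[m + 1]) (C x) = U * (δ^[m]) (C x) - (δ^[m]) (C x) * U := by
        rw [Function.iterate_succ_apply']
      rw [hit]
      set w : A[X] := (δ^[m]) (C x) with hw
      have e1 : (U * w - w * U).coeff n
          = ∑ q ∈ Finset.HasAntidiagonal.antidiagonal n,
              (U.coeff q.1 * w.coeff q.2 - w.coeff q.2 * U.coeff q.1) := by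
        rw [coeff_sub, coeff_mul, coeff_mul, Finset.sum_sub_distrib]
        congr 1
        refine Finset.sum_equiv (Equiv.prodComm ℕ ℕ) (fun q => ?_) (fun q hq => rfl)
        simp only [Finset.HasAntidiagonal.mem_antidiagonal, Equiv.prodComm_apply, Prod.fst_swap, Prod.snd_swap]
        omega
      rw [e1]
      refine Ssum (m + 2) _ _ fun q _ => ?_
      exact Sstep (m + 1) _ _ (ih q.2)
  obtain ⟨n, hn⟩ : ∃ n, p = n + 1 := ⟨p - 1, (Nat.succ_pred_eq_of_pos hp.pos).symm⟩
  have hderU : derivative U = C x := by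
    simp [hU, derivative_mul]
  have hPcast : (p : A[X]) = 0 := by
    rw [← Polynomial.C_eq_natCast, hpA, map_zero]
  have hsmulp : ∀ z : A[X], p • z = 0 := fun z => by
    rw [nsmul_eq_mul, hPcast, zero_mul]
  have hder : ∀ k : ℕ, ∃ c, (derivative (U ^ p)).coeff k = h ^ p * c := by
    have e1 : derivative (U ^ p) = ∑ j ∈ range (n + 1), U ^ j * C x * U ^ (n - j) := by
      rw [derivative_pow_noncomm, hderU, hn]
      exact Finset.sum_congr rfl fun j hj => by rw [Nat.succ_sub_one]
    have e2 : derivative (U ^ p) = (δ^[n]) (C x) := by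
      rw [e1, sum_conj_eq U (C x) n, Finset.sum_eq_single_of_mem n (self_mem_range_succ n)]
      · rw [Nat.sub_self, pow_zero, mul_one, Nat.choose_self, one_smul]
      · intro m hm hmne
        rw [Finset.mem_range] at hm
        have hdvd : p ∣ (n + 1).choose (m + 1) := by
          rw [← hn]
          exact hp.dvd_choose_self (Nat.succ_ne_zero m) (by omega)
        obtain ⟨t, ht⟩ := hdvd
        rw [ht, mul_smul, hsmulp]
    intro k
    rw [e2]
    have := hiter n k
    rwa [← hn] at this
  have hmid : ∀ m : ℕ, 1 ≤ m → m < p → ∃ c, (U ^ p).coeff m = h ^ p * c := by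
    intro m hm1 hmp
    obtain ⟨m', rfl⟩ : ∃ m', m = m' + 1 := ⟨m - 1, by omega⟩
    obtain ⟨c, hc⟩ := hder m'
    rw [coeff_derivative] at hc
    set z : A := (U ^ p).coeff (m' + 1) with hz
    have hcop : Nat.Coprime (m' + 1) p :=
      Nat.Coprime.symm ((Nat.Prime.coprime_iff_not_dvd hp).mpr
        (Nat.not_dvd_of_pos_of_lt (Nat.succ_pos m') hmp))
    obtain ⟨k, -, hk⟩ := Nat.exists_mul_mod_eq_one_of_coprime hcop hp.one_lt
    have hdivmod : (m' + 1) * k = p * ((m' + 1) * k / p) + 1 := by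
      conv_lhs => rw [← Nat.div_add_mod ((m' + 1) * k) p]
      rw [hk]
    refine ⟨c * (k : A), ?_⟩
    have e3 : z * (((m' + 1) * k : ℕ) : A) = h ^ p * (c * (k : A)) := by
      push_cast
      rw [← mul_assoc, hc, mul_assoc]
    have e4 : z * (((m' + 1) * k : ℕ) : A) = z := by
      rw [hdivmod]
      push_cast [hpA]
      simp
    rw [← e4, e3]
  have hzero : ∀ t : ℕ, (U ^ t).coeff 0 = a ^ t := by
    intro t
    induction t with
    | zero => simp
    | succ t ih =>
      rw [pow_succ, mul_coeff_zero, ih, pow_succ]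
      congr 1
      simp [hU]
  have hdegU : U.natDegree ≤ 1 := by
    refine (natDegree_add_le _ _).trans ?_
    have h1 : (C x * X).natDegree ≤ 1 := (natDegree_C_mul_le x X).trans natDegree_X_le
    simp [natDegree_C, h1]
  have htop : ∃ c, (U ^ p).coeff p = h ^ p * c := by
    have e := coeff_pow_of_natDegree_le (p := U) (n := 1) (m := p) hdegU
    rw [mul_one] at e
    have hc1 : U.coeff 1 = x := by simp [hU, coeff_C]
    refine ⟨b ^ p, ?_⟩
    rw [e, hc1, hxdef, Commute.mul_pow (hcentral b)]
  have hevalmul : ∀ f g : A[X], eval 1 (f * g) = eval 1 f * eval 1 g := fun f g =>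
    eval₂_mul_noncomm (RingHom.id A) 1 fun k => Commute.one_right _
  have hevalpow : ∀ t : ℕ, eval 1 (U ^ t) = (a + x) ^ t := by
    have hevalU : eval (1 : A) U = a + x := by simp [hU]
    intro t
    induction t with
    | zero => simp
    | succ t ih => rw [pow_succ, hevalmul, ih, hevalU, pow_succ]
  have hdeg : (U ^ p).natDegree < p + 1 := by
    have h1 : (U ^ p).natDegree ≤ p * U.natDegree := natDegree_pow_le
    have h2 : p * U.natDegree ≤ p * 1 := Nat.mul_le_mul_left p hdegU
    omega
  have hsum : (a + x) ^ p = ∑ i ∈ range (p + 1), (U ^ p).coeff i := by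
    rw [← hevalpow p, eval_eq_sum_range' hdeg]
    exact Finset.sum_congr rfl fun i _ => by rw [one_pow, mul_one]
  rw [hsum, Finset.sum_range_succ', hzero p]
  have e5 : ∀ S : A, S + a ^ p - a ^ p = S := fun S => add_sub_cancel_right S _
  rw [e5]
  refine Ssum p _ _ fun i hi => ?_
  rw [Finset.mem_range] at hi
  rcases eq_or_lt_of_le (Nat.succ_le_of_lt hi) with heq | hlt
  · have h6 : i + 1 = p := heq
    rw [h6]
    exact htop
  · exact hmid (i + 1) (Nat.succ_le_succ (Nat.zero_le i)) hlt
end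

section
/- Let p be a prime, let R and R' be commutative rings with p·R = 0, let f : R → R' be a ring homomorphism which is étale and faithfully flat, and let h ∈ R with h' = f(h). Then R is h-separable if and only if R' is h'-separable. -/
/-!
Statement 11: `h`-separability descends and ascends along étale faithfully flat covers:
if `f : R → R'` is étale and faithfully flat (expressed via an algebra structure), then
`R` is `h`-separable if and only if `R'` is `f(h)`-separable.
-/

open scoped TensorProduct

/-! ### Auxiliary lemmas -/

/-- A nontrivial ring in which a prime `p` vanishes has characteristic `p`. -/
theorem charP_of_prime_cast_eq_zero {A : Type} [CommRing A] [Nontrivial A]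
    {p : ℕ} (hp : p.Prime) (h : (p : A) = 0) : CharP A p := by
  have hd : ringChar A ∣ p := ringChar.dvd h
  rcases (Nat.Prime.eq_one_or_self_of_dvd hp _ hd) with h1 | h1
  · exfalso
    haveI : CharP A 1 := ringChar.of_eq h1
    haveI := CharP.CharOne.subsingleton (R := A)
    exact false_of_nontrivial_of_subsingleton A
  · exact ringChar.of_eq h1

/-- Over a flat module, if `x • m = 0` then `m` lies in `(ann x) • ⊤`. -/
theorem mem_torsionOf_smul_top_of_smul_eq_zero
    {C M : Type} [CommRing C] [AddCommGroup M] [Module C M] [Module.Flat C M]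
    (x : C) (m : M) (hm : x • m = 0) :
    m ∈ (Ideal.torsionOf C C x) • (⊤ : Submodule C M) := by
  classical
  set T : Ideal C := Ideal.torsionOf C C x with hT
  have hexact : Function.Exact (T.subtype) (LinearMap.lsmul C C x) := by
    intro y
    constructor
    · intro hy
      refine ⟨⟨y, ?_⟩, rfl⟩
      rw [Ideal.mem_torsionOf_iff, smul_eq_mul]
      simpa [LinearMap.lsmul_apply, smul_eq_mul, mul_comm] using hy
    · rintro ⟨⟨t, ht⟩, rfl⟩
      rw [Ideal.mem_torsionOf_iff, smul_eq_mul] at ht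
      simp only [LinearMap.lsmul_apply, smul_eq_mul, Submodule.coe_subtype]
      rw [mul_comm]; exact ht
  have h2 := Module.Flat.lTensor_exact (R := C) M hexact
  have hz : (LinearMap.lTensor M (LinearMap.lsmul C C x)) (m ⊗ₜ (1 : C)) = 0 := by
    have : m ⊗ₜ[C] (x • (1 : C)) = (x • m) ⊗ₜ[C] (1 : C) := by
      rw [TensorProduct.tmul_smul, TensorProduct.smul_tmul']
    simp only [LinearMap.lTensor_tmul, LinearMap.lsmul_apply]
    rw [this, hm, TensorProduct.zero_tmul]
  obtain ⟨w, hw⟩ := (h2 (m ⊗ₜ (1 : C))).mp hz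
  have hmem : ∀ w : M ⊗[C] T,
      (TensorProduct.rid C M) (LinearMap.lTensor M T.subtype w) ∈ T • (⊤ : Submodule C M) := by
    intro w
    induction w using TensorProduct.induction_on with
    | zero => simp
    | tmul m' t =>
      simp only [LinearMap.lTensor_tmul, Submodule.coe_subtype, TensorProduct.rid_tmul]
      exact Submodule.smul_mem_smul t.2 trivial
    | add u v hu hv =>
      rw [map_add, map_add]
      exact Submodule.add_mem _ hu hv
  have hm' : m = (TensorProduct.rid C M) (m ⊗ₜ (1 : C)) := by simp
  rw [hm', ← hw]
  exact hmem w

/-- Ideal membership descends along faithfully flat algebras. -/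
theorem mem_of_algebraMap_mem_map
    {R S : Type} [CommRing R] [CommRing S] [Algebra R S] [Module.FaithfullyFlat R S]
    (I : Ideal R) (y : R) (hy : algebraMap R S y ∈ I.map (algebraMap R S)) : y ∈ I := by
  classical
  by_contra hy'
  set q : R →+* R ⧸ I := Ideal.Quotient.mk I with hq
  have hne : q y ≠ 0 := by
    rw [Ne, Ideal.Quotient.eq_zero_iff_mem]; exact hy'
  set K : Submodule R (R ⧸ I) := Submodule.span R {q y} with hK
  haveI : Nontrivial K :=
    ⟨⟨⟨q y, Submodule.mem_span_singleton_self _⟩, 0, by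
      intro hcon
      exact hne (by simpa using congrArg Subtype.val hcon)⟩⟩
  -- the composite K ⊗ S → (R⧸I) ⊗ S ≃ S⧸I•⊤ is zero
  have hval : ∀ w : K ⊗[R] S,
      (TensorProduct.quotTensorEquivQuotSMul S I)
        (LinearMap.rTensor S K.subtype w) = 0 := by
    intro w
    induction w using TensorProduct.induction_on with
    | zero => simp
    | tmul k s =>
      obtain ⟨c, hc⟩ := Submodule.mem_span_singleton.mp k.2
      have hk : (k : R ⧸ I) = q (c * y) := by
        rw [← hc, map_mul]
        rfl
      simp only [LinearMap.rTensor_tmul, Submodule.coe_subtype]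
      rw [hk, TensorProduct.quotTensorEquivQuotSMul_mk_tmul]
      rw [Submodule.Quotient.mk_eq_zero]
      refine (SetLike.ext_iff.mp (Ideal.smul_top_eq_map (S := S) I) _).mpr ?_
      rw [Submodule.restrictScalars_mem, Algebra.smul_def, map_mul]
      exact Ideal.mul_mem_right _ _ (Ideal.mul_mem_left _ _ hy)
    | add u v hu hv =>
      rw [map_add, map_add, hu, hv, add_zero]
  haveI : Subsingleton (K ⊗[R] S) := by
    constructor
    intro w₁ w₂
    have hinj : Function.Injective (LinearMap.rTensor S K.subtype) :=
      Module.Flat.rTensor_preserves_injective_linearMap _ K.injective_subtype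
    apply hinj
    apply (TensorProduct.quotTensorEquivQuotSMul S I).injective
    rw [hval, hval]
  haveI : Subsingleton K := Module.FaithfullyFlat.rTensor_reflects_triviality R S K
  exact hne (by
    have : (⟨q y, Submodule.mem_span_singleton_self _⟩ : K) = 0 := Subsingleton.elim _ _
    simpa using congrArg Subtype.val this)

section FrobeniusKernel

/-- Type synonym to carry the Frobenius twisted algebra structure. -/
def FrobTwist (A : Type) : Type := A

instance (A : Type) [CommRing A] : CommRing (FrobTwist A) := ‹CommRing A›

/-- The tautological ring isomorphism `A ≃+* FrobTwist A`. -/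
def FrobTwist.equiv (A : Type) [CommRing A] : A ≃+* FrobTwist A := RingEquiv.refl A

/-- **Key lemma**: over a base of characteristic `p`, for a formally unramified, essentially
finitely generated, flat algebra `B` over `A`, any `b : B` with `b ^ p = 0` lies in the
ideal generated by the corresponding elements of `A`.  (This is the injectivity of the
relative Frobenius of `B/A`.) -/
theorem pow_p_eq_zero_mem_span
    (p : ℕ) (hp : p.Prime) (A B : Type) [CommRing A] [CommRing B] [Algebra A B]
    (hpA : (p : A) = 0)
    [Algebra.FormallyUnramified A B] [Algebra.EssFiniteType A B] [Module.Flat A B]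
    (b : B) (hb : b ^ p = 0) :
    b ∈ Ideal.span ((algebraMap A B) '' {x : A | x ^ p = 0}) := by
  classical
  rcases subsingleton_or_nontrivial B with hB | hB
  · rw [Subsingleton.elim b 0]; exact Ideal.zero_mem _
  haveI : Nontrivial A := (algebraMap A B).domain_nontrivial
  haveI : Fact p.Prime := ⟨hp⟩
  haveI : CharP A p := charP_of_prime_cast_eq_zero hp hpA
  have hpB : (p : B) = 0 := by
    rw [← map_natCast (algebraMap A B) p, hpA, map_zero]
  haveI : CharP B p := charP_of_prime_cast_eq_zero hp hpB
  haveI : ExpChar A p := ExpChar.prime hp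
  haveI : ExpChar B p := ExpChar.prime hp
  -- the twisted algebra structure on `FrobTwist A`
  letI : Algebra A (FrobTwist A) :=
    (((FrobTwist.equiv A).toRingHom).comp (frobenius A p)).toAlgebra
  have halgA : ∀ a : A, algebraMap A (FrobTwist A) a = (FrobTwist.equiv A) (a ^ p) :=
    fun a => rfl
  -- the twisted target `FrobTwist B` with `A`-algebra structure `a ↦ (g a)^p`
  letI : Algebra A (FrobTwist B) :=
    (((FrobTwist.equiv B).toRingHom).comp
      ((frobenius B p).comp (algebraMap A B))).toAlgebra
  have halgB : ∀ a : A, algebraMap A (FrobTwist B) a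
      = (FrobTwist.equiv B) ((algebraMap A B a) ^ p) :=
    fun a => rfl
  -- the two algebra maps into `FrobTwist B`
  let φ₁ : FrobTwist A →ₐ[A] FrobTwist B :=
    { toRingHom := ((FrobTwist.equiv B).toRingHom).comp
        ((algebraMap A B).comp ((FrobTwist.equiv A).symm.toRingHom))
      commutes' := by
        intro a
        show algebraMap A B (a ^ p) = (algebraMap A B a) ^ p
        rw [map_pow] }
  let φ₂ : B →ₐ[A] FrobTwist B :=
    { toRingHom := ((FrobTwist.equiv B).toRingHom).comp (frobenius B p)
      commutes' := fun a => rfl }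
  -- the relative Frobenius `W : FrobTwist A ⊗[A] B →+* B`
  let Wa : (FrobTwist A ⊗[A] B) →ₐ[A] FrobTwist B :=
    Algebra.TensorProduct.lift φ₁ φ₂ (fun x y => mul_comm _ _)
  let W : (FrobTwist A ⊗[A] B) →+* B :=
    ((FrobTwist.equiv B).symm.toRingHom).comp Wa.toRingHom
  have hW : ∀ (t : FrobTwist A) (b' : B),
      W (t ⊗ₜ b') = algebraMap A B ((FrobTwist.equiv A).symm t) * b' ^ p := by
    intro t b'
    show (FrobTwist.equiv B).symm (Wa (t ⊗ₜ b')) = _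
    erw [Algebra.TensorProduct.lift_tmul φ₁ φ₂ (fun x y => mul_comm _ _)]
    show algebraMap A B ((FrobTwist.equiv A).symm t) * b' ^ p = _
    rfl
  -- the element `ξ = 1 ⊗ b` is killed by `W`
  set ξ : FrobTwist A ⊗[A] B := (1 : FrobTwist A) ⊗ₜ b with hξdef
  have hWξ : W ξ = 0 := by
    rw [hξdef, hW, map_one, map_one, one_mul, hb]
  -- characteristic p of the tensor ring
  haveI : Nontrivial (FrobTwist A ⊗[A] B) := W.domain_nontrivial
  have hpC : ((p : ℕ) : FrobTwist A ⊗[A] B) = 0 := by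
    rw [← map_natCast (algebraMap A (FrobTwist A ⊗[A] B)) p, hpA, map_zero]
  haveI : CharP (FrobTwist A ⊗[A] B) p := charP_of_prime_cast_eq_zero hp hpC
  haveI : ExpChar (FrobTwist A ⊗[A] B) p := ExpChar.prime hp
  -- elements of `ker W` have vanishing p-th power
  have hpow : ∀ y : FrobTwist A ⊗[A] B, y ^ p = (1 : FrobTwist A) ⊗ₜ[A] (W y) := by
    intro y
    induction y using TensorProduct.induction_on with
    | zero =>
      rw [zero_pow hp.ne_zero, map_zero, TensorProduct.tmul_zero]
    | tmul t b' =>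
      rw [Algebra.TensorProduct.tmul_pow, hW]
      have ht : (t ^ p : FrobTwist A) = ((FrobTwist.equiv A).symm t) • (1 : FrobTwist A) := by
        rw [Algebra.smul_def, mul_one]
        rfl
      rw [ht, TensorProduct.smul_tmul]
      congr 1
      rw [Algebra.smul_def]
    | add u v hu hv =>
      have := (frobenius (FrobTwist A ⊗[A] B) p).map_add u v
      rw [frobenius_def, frobenius_def, frobenius_def] at this
      rw [this, hu, hv, map_add, TensorProduct.tmul_add]
  have hker_pow : ∀ y : FrobTwist A ⊗[A] B, W y = 0 → y ^ p = 0 := by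
    intro y hy
    rw [hpow y, hy, TensorProduct.tmul_zero]
  -- module structures for the Iversen flatness lemma
  letI : Algebra (FrobTwist A ⊗[A] B) B := W.toAlgebra
  letI : Algebra (FrobTwist A) B :=
    ((algebraMap A B).comp ((FrobTwist.equiv A).symm.toRingHom)).toAlgebra
  haveI : IsScalarTower (FrobTwist A) (FrobTwist A ⊗[A] B) B := by
    apply IsScalarTower.of_algebraMap_eq
    intro t
    show algebraMap A B ((FrobTwist.equiv A).symm t) = W (algebraMap _ _ t)
    rw [Algebra.TensorProduct.algebraMap_apply, Algebra.algebraMap_self, RingHom.id_apply, hW]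
    rw [one_pow, mul_one]
  letI : Algebra (FrobTwist A) A := ((FrobTwist.equiv A).symm.toRingHom).toAlgebra
  haveI : IsScalarTower (FrobTwist A) A B := by
    apply IsScalarTower.of_algebraMap_eq
    intro t
    rfl
  haveI : Module.Flat (FrobTwist A) A := by
    refine Module.Flat.of_linearEquiv (M := FrobTwist A) ?_
    exact { toFun := fun a => (FrobTwist.equiv A) a
            invFun := fun t => (FrobTwist.equiv A).symm t
            left_inv := fun a => rfl
            right_inv := fun t => rfl
            map_add' := fun a a' => rfl
            map_smul' := fun t a => rfl }
  haveI : Module.Flat (FrobTwist A) B := Module.Flat.trans (FrobTwist A) A B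
  haveI : Module.Flat (FrobTwist A ⊗[A] B) B :=
    Algebra.FormallyUnramified.flat_of_restrictScalars (FrobTwist A) (FrobTwist A ⊗[A] B) B
  -- `ξ • 1 = 0`, so by flatness `1 ∈ (ann ξ) • ⊤`
  have hsm : ξ • (1 : B) = 0 := by
    rw [Algebra.smul_def, RingHom.algebraMap_toAlgebra, hWξ, zero_mul]
  have h1mem := mem_torsionOf_smul_top_of_smul_eq_zero ξ (1 : B) hsm
  -- produce an element `τ` with `ξ * τ = 0` and `W τ = 1`
  have key : ∀ v : B, v ∈ (Ideal.torsionOf (FrobTwist A ⊗[A] B) (FrobTwist A ⊗[A] B) ξ) • (⊤ : Submodule (FrobTwist A ⊗[A] B) B) →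
      ∃ τ : FrobTwist A ⊗[A] B, ξ * τ = 0 ∧ W τ = v ^ p := by
    intro v hv
    refine Submodule.smul_induction_on hv ?_ ?_
    · intro t ht m _
      rw [Ideal.mem_torsionOf_iff, smul_eq_mul] at ht
      refine ⟨t ^ p * ((1 : FrobTwist A) ⊗ₜ m), ?_, ?_⟩
      · have hps : t ^ p = t * t ^ (p - 1) := by
          conv_lhs => rw [show p = 1 + (p - 1) by have := hp.pos; omega]
          rw [pow_add, pow_one]
        rw [hps, ← mul_assoc, ← mul_assoc, mul_comm ξ t, ht, zero_mul, zero_mul]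
      · rw [map_mul, map_pow, hW, map_one, map_one, one_mul]
        rw [Algebra.smul_def, RingHom.algebraMap_toAlgebra, mul_pow]
    · rintro u v ⟨τ₁, h11, h12⟩ ⟨τ₂, h21, h22⟩
      refine ⟨τ₁ + τ₂, by rw [mul_add, h11, h21, add_zero], ?_⟩
      rw [map_add, h12, h22]
      have := (frobenius B p).map_add u v
      rw [frobenius_def, frobenius_def, frobenius_def] at this
      rw [this]
  obtain ⟨τ, hτ0, hτ1⟩ := key 1 h1mem
  rw [one_pow] at hτ1
  -- `τ^p = 1`, hence `ξ = 0`
  have hτp : τ ^ p = 1 := by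
    have h0 : W (1 - τ) = 0 := by rw [map_sub, map_one, hτ1, sub_self]
    have h1 := hker_pow _ h0
    have h2 : (1 - τ) ^ p = 1 - τ ^ p := by
      have := (frobenius (FrobTwist A ⊗[A] B) p).map_sub 1 τ
      rw [frobenius_def, frobenius_def, frobenius_def, one_pow] at this
      rw [this]
    rw [h2] at h1
    exact (sub_eq_zero.mp h1).symm
  have hξ0 : ξ = 0 := by
    have : ξ * τ ^ p = 0 := by
      have hps : τ ^ p = τ * τ ^ (p - 1) := by
        conv_lhs => rw [show p = 1 + (p - 1) by have := hp.pos; omega]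
        rw [pow_add, pow_one]
      rw [hps, ← mul_assoc, hτ0, zero_mul]
    rwa [hτp, mul_one] at this
  -- extract the conclusion with flatness of `B` over `A`
  have hexact : Function.Exact
      ((LinearMap.ker (Algebra.linearMap A (FrobTwist A))).subtype)
      (Algebra.linearMap A (FrobTwist A)) := by
    intro y
    constructor
    · intro hy
      exact ⟨⟨y, hy⟩, rfl⟩
    · rintro ⟨⟨k, hk⟩, rfl⟩
      exact hk
  have h3 := Module.Flat.rTensor_exact (R := A) B hexact
  have h4 : (LinearMap.rTensor B (Algebra.linearMap A (FrobTwist A))) ((1 : A) ⊗ₜ b) = 0 := by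
    simp only [LinearMap.rTensor_tmul, Algebra.linearMap_apply, map_one]
    exact hξ0
  obtain ⟨w, hw⟩ := (h3 ((1 : A) ⊗ₜ b)).mp h4
  have hmem : ∀ w : (LinearMap.ker (Algebra.linearMap A (FrobTwist A))) ⊗[A] B,
      (TensorProduct.lid A B)
        (LinearMap.rTensor B (LinearMap.ker (Algebra.linearMap A (FrobTwist A))).subtype w)
        ∈ Ideal.span ((algebraMap A B) '' {x : A | x ^ p = 0}) := by
    intro w
    induction w using TensorProduct.induction_on with
    | zero => simp
    | tmul k m =>
      simp only [LinearMap.rTensor_tmul, Submodule.coe_subtype, TensorProduct.lid_tmul]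
      have hk : ((k : A)) ^ p = 0 := by
        have := k.2
        rw [LinearMap.mem_ker, Algebra.linearMap_apply, halgA] at this
        exact (FrobTwist.equiv A).injective (by rw [this, map_zero])
      rw [Algebra.smul_def]
      exact Ideal.mul_mem_right _ _ (Ideal.subset_span ⟨(k : A), hk, rfl⟩)
    | add u v hu hv =>
      rw [map_add, map_add]
      exact Ideal.add_mem _ hu hv
  have hb' : b = (TensorProduct.lid A B)
      (LinearMap.rTensor B (LinearMap.ker (Algebra.linearMap A (FrobTwist A))).subtype w) := by
    rw [hw]
    simp
  rw [hb']
  exact hmem w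

end FrobeniusKernel

/-- Ascent of the separability condition along formally unramified, essentially finite type,
flat algebras in characteristic `p`. -/
theorem ascent_aux
    (p : ℕ) (hp : p.Prime) (R S : Type) [CommRing R] [CommRing S] [Algebra R S]
    (hpR : (p : R) = 0)
    [Algebra.FormallyUnramified R S] [Algebra.EssFiniteType R S] [Module.Flat R S]
    (h : R) (hsep : ∀ x : R, x ^ p ∈ Ideal.span {h} → x ^ p ∈ Ideal.span {h ^ p})
    (a : S) (ha : a ^ p ∈ Ideal.span {algebraMap R S h}) :
    a ^ p ∈ Ideal.span {algebraMap R S h ^ p} := by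
  classical
  rcases subsingleton_or_nontrivial S with hS | hS
  · rw [Subsingleton.elim (a ^ p) 0]; exact Ideal.zero_mem _
  haveI : Fact p.Prime := ⟨hp⟩
  have hpS : (p : S) = 0 := by
    rw [← map_natCast (algebraMap R S) p, hpR, map_zero]
  haveI : CharP S p := charP_of_prime_cast_eq_zero hp hpS
  haveI : ExpChar S p := ExpChar.prime hp
  set g := algebraMap R S with hg
  set I : Ideal R := Ideal.span {h} with hI
  -- the base `A := R⧸I` and the base-changed algebra `B := A ⊗[R] S`
  have hpA : ((p : ℕ) : R ⧸ I) = 0 := by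
    rw [← map_natCast (algebraMap R (R ⧸ I)) p, hpR, map_zero]
  -- `b := 1 ⊗ a` has `b ^ p = 0`
  set b : (R ⧸ I) ⊗[R] S := (1 : R ⧸ I) ⊗ₜ a with hbdef
  have hbp : b ^ p = 0 := by
    rw [hbdef, Algebra.TensorProduct.tmul_pow, one_pow]
    obtain ⟨c, hc⟩ := Ideal.mem_span_singleton'.mp ha
    have : a ^ p = h • c := by rw [Algebra.smul_def, ← hg, mul_comm]; exact hc.symm
    rw [this, TensorProduct.tmul_smul, TensorProduct.smul_tmul']
    have hh1 : h • (1 : R ⧸ I) = 0 := by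
      rw [Algebra.smul_def, mul_one]
      rw [show algebraMap R (R ⧸ I) = Ideal.Quotient.mk I from rfl]
      rw [Ideal.Quotient.eq_zero_iff_mem]
      exact Ideal.subset_span rfl
    rw [hh1, TensorProduct.zero_tmul]
  have hmem := pow_p_eq_zero_mem_span p hp (R ⧸ I) ((R ⧸ I) ⊗[R] S) hpA b hbp
  -- map down to `S ⧸ I.map g`
  set J : Ideal S := I.map g with hJ
  let ρ₁ : (R ⧸ I) →ₐ[R] S ⧸ J :=
    { toRingHom := Ideal.quotientMap J g Ideal.le_comap_map
      commutes' := fun r => rfl }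
  let ρ₂ : S →ₐ[R] S ⧸ J := Ideal.Quotient.mkₐ R J
  let ρ : ((R ⧸ I) ⊗[R] S) →ₐ[R] S ⧸ J :=
    Algebra.TensorProduct.lift ρ₁ ρ₂ (fun x y => mul_comm _ _)
  set JS : Ideal S := Ideal.span (g '' {x : R | x ^ p ∈ I}) with hJS
  have hρmem : (ρ : ((R ⧸ I) ⊗[R] S) →+* S ⧸ J) b ∈ Ideal.map (Ideal.Quotient.mk J) JS := by
    have h1 : (ρ : ((R ⧸ I) ⊗[R] S) →+* S ⧸ J) b ∈
        Ideal.map (ρ : ((R ⧸ I) ⊗[R] S) →+* S ⧸ J)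
          (Ideal.span ((algebraMap (R ⧸ I) ((R ⧸ I) ⊗[R] S)) '' {x : R ⧸ I | x ^ p = 0})) :=
      Ideal.mem_map_of_mem _ hmem
    rw [Ideal.map_span] at h1
    refine Ideal.span_le.mpr ?_ h1
    rintro _ ⟨_, ⟨xb, hxb, rfl⟩, rfl⟩
    obtain ⟨x, rfl⟩ := Ideal.Quotient.mk_surjective xb
    have hxp : x ^ p ∈ I := by
      rw [← Ideal.Quotient.eq_zero_iff_mem, map_pow]
      exact hxb
    have himg : (ρ : ((R ⧸ I) ⊗[R] S) →+* S ⧸ J)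
        ((algebraMap (R ⧸ I) ((R ⧸ I) ⊗[R] S)) (Ideal.Quotient.mk I x))
        = Ideal.Quotient.mk J (g x) := by
      rw [Algebra.TensorProduct.algebraMap_apply, Algebra.algebraMap_self, RingHom.id_apply]
      show ρ ((Ideal.Quotient.mk I x) ⊗ₜ (1 : S)) = _
      erw [Algebra.TensorProduct.lift_tmul ρ₁ ρ₂ (fun x y => mul_comm _ _), map_one, mul_one]
      rfl
    rw [himg]
    apply Ideal.mem_map_of_mem
    exact Ideal.subset_span ⟨x, hxp, rfl⟩
  have hρb : (ρ : ((R ⧸ I) ⊗[R] S) →+* S ⧸ J) b = Ideal.Quotient.mk J a := by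
    rw [hbdef]
    show ρ ((1 : R ⧸ I) ⊗ₜ a) = _
    erw [Algebra.TensorProduct.lift_tmul ρ₁ ρ₂ (fun x y => mul_comm _ _), map_one, one_mul]
    rfl
  rw [hρb] at hρmem
  obtain ⟨s, hsJS, hs⟩ := Ideal.mem_map_iff_of_surjective _ Ideal.Quotient.mk_surjective |>.mp hρmem
  have hdiff : a - s ∈ J := by
    rw [← Ideal.Quotient.eq_zero_iff_mem, map_sub, hs, sub_self]
  -- conclude
  have hsplit : a ^ p = s ^ p + (a - s) ^ p := by
    have := (frobenius S p).map_add s (a - s)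
    rw [frobenius_def, frobenius_def, frobenius_def] at this
    rw [← this, add_sub_cancel]
  rw [hsplit]
  refine Ideal.add_mem _ ?_ ?_
  · -- s ∈ JS ⟹ s^p ∈ span {g h ^ p}
    have : ∀ s ∈ JS, s ^ p ∈ Ideal.span {g h ^ p} := by
      intro s hsmem
      refine Submodule.span_induction ?_ ?_ ?_ ?_ hsmem
      · rintro _ ⟨x, hx, rfl⟩
        obtain ⟨e, he⟩ := Ideal.mem_span_singleton'.mp (hsep x hx)
        have heq : (g x) ^ p = g h ^ p * g e := by
          rw [← map_pow, ← he, map_mul, map_pow, mul_comm]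
        rw [heq]
        exact Ideal.mul_mem_right _ _ (Ideal.subset_span rfl)
      · rw [zero_pow hp.ne_zero]; exact Ideal.zero_mem _
      · intro u v _ _ hu hv
        have := (frobenius S p).map_add u v
        rw [frobenius_def, frobenius_def, frobenius_def] at this
        rw [this]
        exact Ideal.add_mem _ hu hv
      · intro c u _ hu
        rw [smul_eq_mul, mul_pow]
        exact Ideal.mul_mem_left _ _ hu
    exact this s hsJS
  · -- a - s ∈ J = span {g h} ⟹ (a-s)^p ∈ span {g h ^ p}
    have hJspan : J = Ideal.span {g h} := by
      rw [hJ, hI, Ideal.map_span, Set.image_singleton]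
    rw [hJspan] at hdiff
    obtain ⟨d, hd⟩ := Ideal.mem_span_singleton'.mp hdiff
    rw [← hd, mul_pow]
    exact Ideal.mul_mem_left _ _ (Ideal.subset_span rfl)

/-- A commutative ring `R` with `p·R = 0` together with `h ∈ R` is `h`-separable if `h` is
a nonzerodivisor in `R` and, for every `a ∈ R`, `a^p ∈ hR` implies `a^p ∈ h^pR`. -/
def HSeparable (p : ℕ) {R : Type} [CommRing R] (h : R) : Prop :=
  h ∈ nonZeroDivisors R ∧
    ∀ a : R, a ^ p ∈ Ideal.span {h} → a ^ p ∈ Ideal.span {h ^ p}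

theorem hSeparable_iff_of_etale_faithfullyFlat
    (p : ℕ) (hp : p.Prime)
    (R R' : Type) [CommRing R] [CommRing R'] (hpR : (p : R) = 0)
    [Algebra R R'] [Algebra.Etale R R'] [Module.FaithfullyFlat R R']
    (h : R) :
    HSeparable p h ↔ HSeparable p (algebraMap R R' h) := by
  classical
  set g := algebraMap R R' with hg
  constructor
  · rintro ⟨hnzd, hsep⟩
    constructor
    · -- `g h` is a nonzerodivisor, by flatness
      rw [mem_nonZeroDivisors_iff_right]
      intro x hx
      -- multiplication by h on R is injective
      have hinj : Function.Injective (LinearMap.lsmul R R h) := by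
        intro u v huv
        simp only [LinearMap.lsmul_apply, smul_eq_mul] at huv
        have : (u - v) * h = 0 := by
          rw [sub_mul, mul_comm u h, mul_comm v h, huv, sub_self]
        have h2 := (mem_nonZeroDivisors_iff_right.mp hnzd) _ this
        exact sub_eq_zero.mp h2
      have hflat := Module.Flat.lTensor_preserves_injective_linearMap
        (M := R') (LinearMap.lsmul R R h) hinj
      have hz : (LinearMap.lTensor R' (LinearMap.lsmul R R h)) (x ⊗ₜ (1 : R)) = 0 := by
        simp only [LinearMap.lTensor_tmul, LinearMap.lsmul_apply, smul_eq_mul, mul_one]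
        have h1 : x ⊗ₜ[R] h = x ⊗ₜ[R] (h • (1 : R)) := by rw [smul_eq_mul, mul_one]
        have h2 : x ⊗ₜ[R] (h • (1 : R)) = (h • x) ⊗ₜ[R] (1 : R) :=
          (TensorProduct.smul_tmul _ _ _).symm
        rw [h1, h2, Algebra.smul_def, ← hg, mul_comm, hx, TensorProduct.zero_tmul]
      have := hflat (by rw [hz, map_zero] : (LinearMap.lTensor R' (LinearMap.lsmul R R h)) (x ⊗ₜ (1 : R)) = (LinearMap.lTensor R' (LinearMap.lsmul R R h)) 0)
      have hx0 : x ⊗ₜ[R] (1 : R) = (0 : R' ⊗[R] R) := this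
      have : (TensorProduct.rid R R') (x ⊗ₜ (1 : R)) = x := by simp
      rw [← this, hx0, map_zero]
    · -- the divisibility condition ascends
      intro a ha
      haveI : Algebra.FormallyUnramified R R' := inferInstance
      haveI : Algebra.EssFiniteType R R' := inferInstance
      haveI : Module.Flat R R' := inferInstance
      exact ascent_aux p hp R R' hpR h hsep a ha
  · rintro ⟨hnzd', hsep'⟩
    have hinj : Function.Injective g := by
      intro u v huv
      have : g (u - v) = 0 := by rw [map_sub, huv, sub_self]
      have h0 : u - v ∈ (⊥ : Ideal R) := by
        refine mem_of_algebraMap_mem_map (R := R) (S := R') (⊥ : Ideal R) (u - v) ?_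
        rw [Ideal.map_bot, ← hg, this]
        exact Ideal.zero_mem _
      rw [Ideal.mem_bot] at h0
      exact sub_eq_zero.mp h0
    constructor
    · rw [mem_nonZeroDivisors_iff_right]
      intro x hx
      have : g x * g h = 0 := by rw [← map_mul, hx, map_zero]
      have := (mem_nonZeroDivisors_iff_right.mp hnzd') _ this
      exact hinj (by rw [this, map_zero])
    · intro a ha
      have h1 : (g a) ^ p ∈ Ideal.span {g h} := by
        rw [← map_pow]
        have : Ideal.span {g h} = Ideal.map g (Ideal.span {h}) := by
          rw [Ideal.map_span, Set.image_singleton]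
        rw [this]
        exact Ideal.mem_map_of_mem _ ha
      have h2 := hsep' (g a) h1
      have h3 : g (a ^ p) ∈ Ideal.map g (Ideal.span {h ^ p}) := by
        rw [Ideal.map_span, Set.image_singleton, map_pow, map_pow]
        exact h2
      exact mem_of_algebraMap_mem_map _ _ h3
end

section
/- Let p be a prime, B a commutative ring with p·B = 0, A a commutative B-algebra, and I ⊆ A an ideal which is generated by a subset of the B-subalgebra of A generated by the p-th powers {a^p : a ∈ A}. Then the canonical A/I-linear map (A/I) ⊗_A Ω¹_{A/B} → Ω¹_{(A/I)/B} between modules of Kähler differentials is an isomorphism. -/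
/-!
Statement 13: if `I ⊆ A` is an ideal generated by a subset of the `B`-subalgebra of `A`
generated by the `p`-th powers (with `p·B = 0`), then the canonical `A/I`-linear map
`(A/I) ⊗_A Ω¹_{A/B} → Ω¹_{(A/I)/B}` is an isomorphism.
-/

open TensorProduct

theorem kaehler_differentials_of_frobenius_neighbourhood
    (p : ℕ) (hp : p.Prime) (B : Type) [CommRing B] (hpB : (p : B) = 0)
    (A : Type) [CommRing A] [Algebra B A] (I : Ideal A)
    (hI : ∃ s : Set A,
      s ⊆ (Algebra.adjoin B (Set.range fun a : A => a ^ p) : Subalgebra B A) ∧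
      I = Ideal.span s) :
    Function.Bijective (KaehlerDifferential.mapBaseChange B A (A ⧸ I)) := by
  obtain ⟨s, hs, rfl⟩ := hI
  have hpA : (p : A) = 0 := by
    rw [← map_natCast (algebraMap B A) p, hpB, map_zero]
  -- D vanishes on the adjoin of p-th powers
  have hD : ∀ x ∈ Algebra.adjoin B (Set.range fun a : A => a ^ p),
      KaehlerDifferential.D B A x = 0 := by
    have := Derivation.eqOn_adjoin (R := B) (D1 := KaehlerDifferential.D B A) (D2 := 0)
      (s := Set.range fun a : A => a ^ p) ?_
    · intro x hx; simpa using this hx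
    · rintro _ ⟨a, rfl⟩
      show KaehlerDifferential.D B A (a ^ p) = 0
      rw [Derivation.leibniz_pow, ← Nat.cast_smul_eq_nsmul A, hpA, zero_smul]
  have surj : Function.Surjective (algebraMap A (A ⧸ Ideal.span s)) :=
    Ideal.Quotient.mk_surjective
  constructor
  · -- injectivity
    rw [← LinearMap.ker_eq_bot]
    have hker := KaehlerDifferential.range_kerCotangentToTensor B A (A ⧸ Ideal.span s) surj
    have hzero : ∀ x ∈ Ideal.span s,
        (1 : A ⧸ Ideal.span s) ⊗ₜ[A] KaehlerDifferential.D B A x = 0 := by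
      intro x hx
      refine Submodule.span_induction ?_ ?_ ?_ ?_ hx
      · intro x hxs
        rw [hD x (hs hxs), tmul_zero]
      · simp
      · intro x y _ _ hx hy
        rw [map_add, tmul_add, hx, hy, add_zero]
      · intro a x hxs hx0
        have hxI : x ∈ Ideal.span s := hxs
        rw [smul_eq_mul, Derivation.leibniz, tmul_add, tmul_smul, hx0, smul_zero,
          zero_add, ← smul_tmul]
        rw [show x • (1 : A ⧸ Ideal.span s) = 0 by
          rw [← Algebra.algebraMap_eq_smul_one]
          exact Ideal.Quotient.eq_zero_iff_mem.mpr hxI, zero_tmul]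
    have : LinearMap.range (KaehlerDifferential.kerCotangentToTensor B A (A ⧸ Ideal.span s)) = ⊥ := by
      rw [LinearMap.range_eq_bot]
      ext c
      obtain ⟨⟨x, hx⟩, rfl⟩ := Ideal.toCotangent_surjective _ c
      rw [KaehlerDifferential.kerCotangentToTensor_toCotangent]
      have hxI : x ∈ Ideal.span s := by
        rwa [← Ideal.mk_ker (I := Ideal.span s), RingHom.mem_ker, ← RingHom.mem_ker]
      exact (hzero x hxI).trans rfl
    have : (LinearMap.ker (KaehlerDifferential.mapBaseChange B A
        (A ⧸ Ideal.span s))).restrictScalars A = ⊥ := by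
      rw [← hker, this]
    ext x
    simpa using SetLike.ext_iff.mp this x
  · exact KaehlerDifferential.mapBaseChange_surjective B A _ surj
end

section
/- Let p be a prime, B a commutative ring with p·B = 0, and L a Lie algebra over B with universal enveloping algebra U(L) and canonical map ι : L → U(L). Suppose x, z ∈ L satisfy ⁅z, y⁆ = (ad x)^p(y) for all y ∈ L, where (ad x)^p denotes the p-fold iterate of y ↦ ⁅x, y⁆. Then the element ι(x)^p − ι(z) lies in the center of U(L). -/
/-!
Statement 15: Let `p` be a prime, `B` a commutative ring with `p·B = 0`, `L` a Lie algebra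
over `B`, and `x, z ∈ L` with `⁅z, y⁆ = (ad x)^p(y)` for all `y`.  Then
`ι(x)^p − ι(z)` is central in the universal enveloping algebra `U(L)`.
-/

theorem pow_p_sub_restricted_power_is_central_in_enveloping_algebra
    (p : ℕ) (hp : p.Prime) (B : Type) [CommRing B] (hpB : (p : B) = 0)
    (L : Type) [LieRing L] [LieAlgebra B L] (x z : L)
    (hxz : ∀ y : L, ⁅z, y⁆ = ((LieAlgebra.ad B L x) ^ p) y) :
    (UniversalEnvelopingAlgebra.ι B x) ^ p - UniversalEnvelopingAlgebra.ι B z ∈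
      Subalgebra.center B (UniversalEnvelopingAlgebra B L) := by
  set U := UniversalEnvelopingAlgebra B L
  letI : LieRing U := LieRing.ofAssociativeRing
  letI : LieAlgebra B U := LieAlgebra.ofAssociativeAlgebra
  set ι : L →ₗ⁅B⁆ U := UniversalEnvelopingAlgebra.ι B
  set a : U := ι x with ha
  set c : U := a ^ p - ι z with hc
  -- `p = 0` in `U`
  have hpU : (p : U) = 0 := by
    have : (p : U) = algebraMap B U (p : B) := by
      simp [map_natCast]
    rw [this, hpB, map_zero]
  -- `p = 0` in `Module.End B U`
  have hpE : (p : Module.End B U) = 0 := by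
    ext u
    simp only [Module.End.natCast_apply, LinearMap.zero_apply]
    rw [nsmul_eq_mul, hpU, zero_mul]
  -- `(-1)^p = -1` in `Module.End B U`
  have hneg : ((-1 : Module.End B U)) ^ p = -1 := by
    rcases hp.eq_two_or_odd' with h2 | hodd
    · subst h2
      have h2' : (2 : Module.End B U) = 0 := by exact_mod_cast hpE
      have h11 : (1 : Module.End B U) + 1 = 0 := by
        rw [← h2']; norm_num
      have hm : (-1 : Module.End B U) = 1 := neg_eq_of_add_eq_zero_left h11
      rw [hm, one_pow]
    · exact hodd.neg_one_pow
  -- Jacobson : `(ad a)^p = (mulLeft a)^p - (mulRight a)^p`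
  have hJac : (LieAlgebra.ad B U a) ^ p
      = (LinearMap.mulLeft B a) ^ p - (LinearMap.mulRight B a) ^ p := by
    have had : (LieAlgebra.ad B U a : Module.End B U)
        = LinearMap.mulLeft B a - LinearMap.mulRight B a := by
      have := congrFun (LieAlgebra.ad_eq_lmul_left_sub_lmul_right (R := B) U) a
      simpa using this
    have hcomm : Commute (LinearMap.mulLeft B a) (-(LinearMap.mulRight B a)) :=
      (LinearMap.commute_mulLeft_right a a).neg_right
    have key := hcomm.add_pow_prime_eq hp
    have hnegpow : (-(LinearMap.mulRight B a)) ^ p = -((LinearMap.mulRight B a) ^ p) := by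
      rw [neg_pow, hneg, neg_one_mul]
    calc (LieAlgebra.ad B U a : Module.End B U) ^ p
        = (LinearMap.mulLeft B a + -(LinearMap.mulRight B a)) ^ p := by
          rw [had, sub_eq_add_neg]
      _ = (LinearMap.mulLeft B a) ^ p + (-(LinearMap.mulRight B a)) ^ p
            + (p : Module.End B U) * _ * _ * _ := key
      _ = (LinearMap.mulLeft B a) ^ p - (LinearMap.mulRight B a) ^ p := by
          rw [hnegpow, hpE, zero_mul, zero_mul, zero_mul, add_zero, sub_eq_add_neg]
  -- `ι` intertwines powers of `ad`
  have hiter : ∀ (n : ℕ) (y : L),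
      ι (((LieAlgebra.ad B L x) ^ n) y) = ((LieAlgebra.ad B U a) ^ n) (ι y) := by
    intro n
    induction n with
    | zero => intro y; simp
    | succ n ih =>
      intro y
      rw [pow_succ', pow_succ']
      simp only [Module.End.mul_apply, LieHom.coe_toLinearMap, LieAlgebra.ad_apply]
      rw [← ih y]
      exact ι.map_lie x _
  -- `c` commutes with every `ι y`
  have hcy : ∀ y : L, c * ι y = ι y * c := by
    intro y
    have h1 : a ^ p * ι y - ι y * a ^ p = ι (((LieAlgebra.ad B L x) ^ p) y) := by
      rw [hiter p y, hJac]
      simp [LinearMap.sub_apply, LinearMap.pow_mulLeft, LinearMap.pow_mulRight,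
        LinearMap.mulLeft_apply, LinearMap.mulRight_apply]
    have h2 : ι z * ι y - ι y * ι z = ι (((LieAlgebra.ad B L x) ^ p) y) := by
      rw [← hxz y, ι.map_lie z y, LieRing.of_associative_ring_bracket]
    have : c * ι y - ι y * c = 0 := by
      rw [hc]
      have : (a ^ p - ι z) * ι y - ι y * (a ^ p - ι z)
          = (a ^ p * ι y - ι y * a ^ p) - (ι z * ι y - ι y * ι z) := by simp only [sub_mul, mul_sub]; abel
      rw [this, h1, h2, sub_self]
    exact sub_eq_zero.mp this
  -- conclude by generation
  rw [Subalgebra.mem_center_iff]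
  intro b
  obtain ⟨t, rfl⟩ : ∃ t, UniversalEnvelopingAlgebra.mkAlgHom B L t = b := Quot.exists_rep b
  induction t using TensorAlgebra.induction with
  | algebraMap r => rw [AlgHom.commutes]; exact Algebra.commutes r c
  | ι m =>
    have : UniversalEnvelopingAlgebra.mkAlgHom B L (TensorAlgebra.ι B m)
        = ι m := rfl
    rw [this]; exact (hcy m).symm
  | mul s t hs ht => rw [map_mul, mul_assoc, ht, ← mul_assoc, hs, mul_assoc]
  | add s t hs ht => rw [map_add, add_mul, hs, ht, mul_add]
end

section
/- Let p be a prime, B a commutative ring, and A a commutative B-algebra with p·A = 0. If D : A → A is a B-linear derivation, then the p-fold composite D^p = D ∘ ⋯ ∘ D is again a B-linear derivation of A. -/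
open Finset in
private lemma iterLeibniz {B A : Type} [CommRing B] [CommRing A] [Algebra B A]
    (D : Derivation B A A) (a b : A) (n : ℕ) :
    (⇑D)^[n] (a * b) =
      ∑ k ∈ range (n + 1), n.choose k • ((⇑D)^[k] a * (⇑D)^[n - k] b) := by
  induction n with
  | zero => simp
  | succ n ih =>
    rw [Function.iterate_succ_apply', ih, map_sum]
    have step : ∀ k ∈ range (n + 1),
        D (n.choose k • ((⇑D)^[k] a * (⇑D)^[n - k] b)) =
          n.choose k • ((⇑D)^[k + 1] a * (⇑D)^[n + 1 - (k + 1)] b) +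
          n.choose k • ((⇑D)^[k] a * (⇑D)^[n + 1 - k] b) := by
      intro k hk
      rw [mem_range] at hk
      have h1 : n + 1 - (k + 1) = n - k := by omega
      have h2 : n + 1 - k = (n - k) + 1 := by omega
      rw [map_nsmul, D.leibniz, h1, h2, Function.iterate_succ_apply',
        Function.iterate_succ_apply', smul_add, smul_eq_mul, smul_eq_mul]
      ring_nf
    rw [sum_congr rfl step, sum_add_distrib]
    set g : ℕ → A := fun k => (⇑D)^[k] a * (⇑D)^[n + 1 - k] b with hg
    rw [Finset.sum_range_succ' (fun k => (n + 1).choose k • g k) (n + 1)]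
    simp only [Nat.choose_succ_succ, add_smul, Nat.choose_zero_right, one_smul,
      sum_add_distrib]
    have : ∑ k ∈ range (n + 1), n.choose k • g k =
        ∑ k ∈ range (n + 1), n.choose (k + 1) • g (k + 1) + g 0 := by
      rw [Finset.sum_range_succ' (fun k => n.choose k • g k) n,
        Finset.sum_range_succ (fun k => n.choose (k + 1) • g (k + 1)) n]
      simp
    rw [this]
    abel

theorem derivation_pow_p_is_derivation
    (p : ℕ) (hp : p.Prime) (B : Type) [CommRing B]
    (A : Type) [CommRing A] [Algebra B A] (hpA : (p : A) = 0)
    (D : Derivation B A A) :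
    ∃ D' : Derivation B A A, ∀ a : A, D' a = (⇑D)^[p] a := by
  have hiter : ∀ a : A, (D.toLinearMap ^ p) a = (⇑D)^[p] a := fun a =>
    Module.End.pow_apply D.toLinearMap p a
  have hpos : 0 < p := hp.pos
  refine ⟨{ toLinearMap := D.toLinearMap ^ p, map_one_eq_zero' := ?_, leibniz' := ?_ }, ?_⟩
  · show (D.toLinearMap ^ p) 1 = 0
    rw [hiter]
    obtain ⟨q, rfl⟩ := Nat.exists_eq_succ_of_ne_zero hpos.ne'
    rw [Function.iterate_succ_apply, D.map_one_eq_zero]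
    simp
  · intro a b
    show (D.toLinearMap ^ p) (a * b) = a • (D.toLinearMap ^ p) b + b • (D.toLinearMap ^ p) a
    rw [hiter, hiter, hiter, iterLeibniz]
    rw [Finset.sum_range_succ,
      Finset.sum_eq_single_of_mem 0 (Finset.mem_range.mpr hpos) ?_]
    · simp [smul_eq_mul, mul_comm]
    · intro k hk hk0
      have hdvd : p ∣ p.choose k := hp.dvd_choose_self hk0 (Finset.mem_range.mp hk)
      obtain ⟨c, hc⟩ := hdvd
      rw [hc]
      have : ((p * c : ℕ) : A) = 0 := by push_cast [hpA]; ring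
      rw [nsmul_eq_mul, this, zero_mul]
  · intro a
    exact hiter a
end
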